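/- arXiv:1811.07781 — 7 statements merged into one kernel-verified Lean document; each statement's English description precedes it below -/
import Mathlib

section
/- Elements of SO(2,ℝ) are exactly the Frobenius-norm minimizers in SL(2,ℝ): for every 2×2 real matrix A with det A = 1 one has |A|² ≥ 2, and equality |A|² = 2 holds if and only if A ∈ SO(2,ℝ). Consequently min{|A|² : A ∈ SL(2,ℝ)} = 2 and SO(2,ℝ) = {A ∈ SL(2,ℝ) : |A|² = 2}. -/
open Matrix

noncomputable section

/-- `M²`: the space of 2×2 real matrices. -/
abbrev M2 : Type := Matrix (Fin 2) (Fin 2) ℝ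

/-- Frobenius inner product `⟨A,B⟩ = tr(AᵀB)`. -/
def mip (A B : M2) : ℝ := (Aᵀ * B).trace

/-- Frobenius norm `|A| = ⟨A,A⟩^{1/2}`. -/
def fnorm (A : M2) : ℝ := Real.sqrt (mip A A)

/-- The matrix Z = [[0,−1],[1,0]]. -/
def Zm : M2 := !![0, -1; 1, 0]

/-- The matrix K = [[1,0],[0,−1]]. -/
def Km : M2 := !![1, 0; 0, -1]

/-- The matrix M = [[0,1],[1,0]]. -/
def Mm : M2 := !![0, 1; 1, 0]

/-- Cofactor: cof [[a,b],[c,d]] = [[d,−c],[−b,a]]. -/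
def cofm (A : M2) : M2 := !![A 1 1, -(A 1 0); -(A 0 1), A 0 0]

/-- Membership in SO(2,ℝ). -/
def isSO (U : M2) : Prop := U.det = 1 ∧ U⁻¹ = Uᵀ

/-- The rotation U(θ) = cos θ·I + sin θ·Z. -/
def Um (θ : ℝ) : M2 := Real.cos θ • (1 : M2) + Real.sin θ • Zm

/-- Invariant X₁(A,B) = ½|B|² + (κ/2)|A|². -/
def X1 (κ : ℝ) (A B : M2) : ℝ := (1/2) * mip B B + (κ/2) * mip A A

/-- Invariant X₂(A,B) = ½⟨ZA − AZ, B⟩. -/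
def X2 (A B : M2) : ℝ := (1/2) * mip (Zm * A - A * Zm) B

/-- Invariant X₃(A,B) = ½⟨ZA + AZ, B⟩. -/
def X3 (A B : M2) : ℝ := (1/2) * mip (Zm * A + A * Zm) B

/-- Lagrange multiplier Λ(A,B) = 2(κ − det B)/|A|². -/
def Lam (κ : ℝ) (A B : M2) : ℝ := 2 * (κ - B.det) / (mip A A)

attribute [local instance] Matrix.normedAddCommGroup Matrix.normedSpace

/-
For `A = [[a, b], [c, d]]` one has the identity
`|A|² - 2 det A = (a - d)² + (b + c)²`, so `|A|² ≥ 2` on `SL(2,ℝ)`, with equality exactly for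
`A = [[a, b], [-b, a]]`. For those `A` the adjugate is `Aᵀ`, hence `A⁻¹ = Aᵀ` when `det A = 1`;
conversely `AᵀA = 1` gives `|A|² = tr 1 = 2`.
-/

lemma mip_self_sub_two_mul_det (A : M2) :
    mip A A - 2 * A.det = (A 0 0 - A 1 1) ^ 2 + (A 0 1 + A 1 0) ^ 2 := by
  simp only [mip, trace_fin_two, mul_apply, Fin.sum_univ_two, transpose_apply, det_fin_two]
  ring

lemma two_mul_det_le_mip_self (A : M2) : 2 * A.det ≤ mip A A := by
  linarith [mip_self_sub_two_mul_det A, sq_nonneg (A 0 0 - A 1 1), sq_nonneg (A 0 1 + A 1 0)]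

lemma mip_self_eq_two_mul_det_iff (A : M2) :
    mip A A = 2 * A.det ↔ A 1 1 = A 0 0 ∧ A 1 0 = -A 0 1 := by
  rw [← sub_eq_zero, mip_self_sub_two_mul_det,
    add_eq_zero_iff_of_nonneg (sq_nonneg _) (sq_nonneg _), sq_eq_zero_iff, sq_eq_zero_iff]
  constructor <;> rintro ⟨h₁, h₂⟩ <;> constructor <;> linarith

lemma adjugate_eq_transpose_of_conformal {A : M2} (h₁ : A 1 1 = A 0 0) (h₂ : A 1 0 = -A 0 1) :
    adjugate A = Aᵀ := by
  rw [adjugate_fin_two, eta_fin_two Aᵀ]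
  simp [h₁, h₂]

lemma mip_self_of_isSO {U : M2} (hU : isSO U) : mip U U = 2 := by
  have hunit : IsUnit U.det := by rw [hU.1]; exact isUnit_one
  have horth : Uᵀ * U = 1 := by rw [← hU.2]; exact nonsing_inv_mul U hunit
  simp [mip, horth]

lemma isSO_iff_mip_self_eq_two {A : M2} (hA : A.det = 1) : isSO A ↔ mip A A = 2 := by
  refine ⟨mip_self_of_isSO, fun h => ⟨hA, ?_⟩⟩
  obtain ⟨h₁, h₂⟩ := (mip_self_eq_two_mul_det_iff A).1 (by rw [h, hA, mul_one])
  rw [inv_def, hA, Ring.inverse_one, one_smul, adjugate_eq_transpose_of_conformal h₁ h₂]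

/-- Elements of SO(2,ℝ) are exactly the Frobenius-norm minimizers in SL(2,ℝ). -/
theorem so2_norm_minimizers :
    (∀ A : M2, A.det = 1 → 2 ≤ mip A A ∧ (mip A A = 2 ↔ isSO A)) ∧
    IsLeast {r : ℝ | ∃ A : M2, A.det = 1 ∧ r = mip A A} 2 ∧
    {U : M2 | isSO U} = {A : M2 | A.det = 1 ∧ mip A A = 2} := by
  have lower_bound (A : M2) (hA : A.det = 1) : 2 ≤ mip A A := by
    simpa [hA] using two_mul_det_le_mip_self A
  refine ⟨fun A hA => ⟨lower_bound A hA, (isSO_iff_mip_self_eq_two hA).symm⟩,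
    ⟨⟨1, det_one, (mip_self_of_isSO ⟨det_one, by simp⟩).symm⟩, ?_⟩, ?_⟩
  · rintro r ⟨A, hA, rfl⟩
    exact lower_bound A hA
  · ext A
    exact ⟨fun hA => ⟨hA.1, mip_self_of_isSO hA⟩, fun ⟨hA, h⟩ => (isSO_iff_mip_self_eq_two hA).2 h⟩
end
end

section
/- For all 2×2 real matrices A and B, ⟨A,B⟩⟨cof A,B⟩ + ⟨ZA,B⟩⟨AZ,B⟩ = ½⟨cof A,A⟩|B|² + ½⟨cof B,B⟩|A|². -/
open Matrix

noncomputable section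

attribute [local instance] Matrix.normedAddCommGroup Matrix.normedSpace

/-!
Identify `ℝ²` with `ℂ` and write `A v = z v + w v̄`. Then `⟨A, B⟩ = 2 Re (z̄ z' + w̄ w')`, taking the
cofactor replaces `(z, w)` by `(z, -w)`, and `A ↦ Z A`, `A ↦ A Z` act by `(z, w) ↦ (i z, i w)` and
`(z, w) ↦ (i z, -i w)`. With `u = z̄ z'`, `t = w̄ w'` the left side becomes
`4 (Re (u + t) Re (u - t) + Im (u + t) Im (u - t)) = 4 (|u|² - |t|²)`, and so does the right side,
since `|u|² = |z|² |z'|²` and `|t|² = |w|² |w'|²`.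
-/

open ComplexConjugate

/-- Under `ℝ² ≅ ℂ`, `A` acts as `v ↦ conformalPart A * v + anticonformalPart A * conj v`. -/
def conformalPart (A : M2) : ℂ := ⟨(A 0 0 + A 1 1) / 2, (A 1 0 - A 0 1) / 2⟩

def anticonformalPart (A : M2) : ℂ := ⟨(A 0 0 - A 1 1) / 2, (A 0 1 + A 1 0) / 2⟩

lemma mip_eq_two_mul_re (A B : M2) :
    mip A B = 2 * (conj (conformalPart A) * conformalPart B
      + conj (anticonformalPart A) * anticonformalPart B).re := by
  simp [mip, trace, conformalPart, anticonformalPart, Matrix.mul_apply, Fin.sum_univ_two]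
  ring

lemma conformalPart_cofm (A : M2) : conformalPart (cofm A) = conformalPart A := by
  apply Complex.ext <;> simp [conformalPart, cofm] <;> ring

lemma anticonformalPart_cofm (A : M2) : anticonformalPart (cofm A) = -anticonformalPart A := by
  apply Complex.ext <;> simp [anticonformalPart, cofm] <;> ring

lemma conformalPart_Zm_mul (A : M2) : conformalPart (Zm * A) = Complex.I * conformalPart A := by
  apply Complex.ext <;> simp [conformalPart, Zm, Matrix.mul_apply, Fin.sum_univ_two]
  ring

lemma anticonformalPart_Zm_mul (A : M2) :
    anticonformalPart (Zm * A) = Complex.I * anticonformalPart A := by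
  apply Complex.ext <;> simp [anticonformalPart, Zm, Matrix.mul_apply, Fin.sum_univ_two] <;> ring

lemma conformalPart_mul_Zm (A : M2) : conformalPart (A * Zm) = Complex.I * conformalPart A := by
  apply Complex.ext <;> simp [conformalPart, Zm, Matrix.mul_apply, Fin.sum_univ_two] <;> ring

lemma anticonformalPart_mul_Zm (A : M2) :
    anticonformalPart (A * Zm) = -(Complex.I * anticonformalPart A) := by
  apply Complex.ext <;> simp [anticonformalPart, Zm, Matrix.mul_apply, Fin.sum_univ_two]
  ring

section

variable (A B : M2)

local notation "z" => conformalPart A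
local notation "w" => anticonformalPart A
local notation "z'" => conformalPart B
local notation "w'" => anticonformalPart B

lemma mip_cofm_left : mip (cofm A) B = 2 * (conj z * z' - conj w * w').re := by
  simp [mip_eq_two_mul_re, conformalPart_cofm, anticonformalPart_cofm, sub_eq_add_neg]

lemma mip_Zm_mul_left : mip (Zm * A) B = 2 * (conj z * z' + conj w * w').im := by
  simp [mip_eq_two_mul_re, conformalPart_Zm_mul, anticonformalPart_Zm_mul]
  ring

lemma mip_mul_Zm_left : mip (A * Zm) B = 2 * (conj z * z' - conj w * w').im := by
  simp [mip_eq_two_mul_re, conformalPart_mul_Zm, anticonformalPart_mul_Zm]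
  ring

lemma mip_self : mip A A = 2 * (Complex.normSq z + Complex.normSq w) := by
  simp [mip_eq_two_mul_re, Complex.normSq_apply]

lemma mip_cofm_self : mip (cofm A) A = 2 * (Complex.normSq z - Complex.normSq w) := by
  simp [mip_cofm_left, Complex.normSq_apply]

end

lemma Complex.add_re_mul_sub_re_add_add_im_mul_sub_im (u t : ℂ) :
    (u + t).re * (u - t).re + (u + t).im * (u - t).im = Complex.normSq u - Complex.normSq t := by
  simp only [Complex.normSq_apply, Complex.add_re, Complex.sub_re, Complex.add_im, Complex.sub_im]
  ring

/-- the quadratic identity of Lemma `metaid`. -/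
theorem metaid (A B : M2) :
    mip A B * mip (cofm A) B + mip (Zm * A) B * mip (A * Zm) B
      = (1/2) * mip (cofm A) A * mip B B + (1/2) * mip (cofm B) B * mip A A := by
  have key := Complex.add_re_mul_sub_re_add_add_im_mul_sub_im
    (conj (conformalPart A) * conformalPart B) (conj (anticonformalPart A) * anticonformalPart B)
  simp only [Complex.normSq_mul, Complex.normSq_conj] at key
  rw [mip_cofm_self, mip_cofm_self, mip_self, mip_self, mip_eq_two_mul_re A B, mip_cofm_left,
    mip_Zm_mul_left, mip_mul_Zm_left]
  linear_combination 4 * key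
end
end

section
/- For every x = (x₁,x₂,x₃) ∈ ℝ³ one has det φ(x) = 1 and |φ(x)|² = 2(1 + x₁² + x₂²); the map φ : ℝ³ → M² is surjective onto SL(2,ℝ); and φ(x) ∈ SO(2,ℝ) if and only if (x₁,x₂) = (0,0). -/
open Matrix

noncomputable section

attribute [local instance] Matrix.normedAddCommGroup Matrix.normedSpace

/-- ρ(x) = (2 + x₁² + x₂²)^{1/2}. -/
def rho (x1 x2 : ℝ) : ℝ := Real.sqrt (2 + x1 ^ 2 + x2 ^ 2)

/-- φ(x) = (1/√2)(ρ(x)cos x₃ · I + ρ(x)sin x₃ · Z + x₁·K + x₂·M). -/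
def phi (x1 x2 x3 : ℝ) : M2 :=
  (Real.sqrt 2)⁻¹ •
    ((rho x1 x2 * Real.cos x3) • (1 : M2) + (rho x1 x2 * Real.sin x3) • Zm
      + x1 • Km + x2 • Mm)

/-! The proof works in the coordinates of the orthogonal basis `I, Z, K, M` of `M²`: in them the
determinant is the quadratic form `p² + q² - u² - v²` and `|A|²` is `2(p² + q² + u² + v²)`, while `φ`
has coordinates `(ρ cos x₃, ρ sin x₃, x₁, x₂)/√2`, so `ρ² = 2 + x₁² + x₂²` gives both identities.
Conversely the coordinates `(p, q, u, v)` of `A ∈ SL(2,ℝ)` are recovered with `x₁ = √2 u`, `x₂ = √2 v`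
and `x₃` the polar angle of `(p, q)`, whose radius `√2 ‖(p, q)‖` is `ρ(x)` because `det A = 1`.
An orthogonal `U` has `|U|² = tr(UUᵀ) = 2`, which forces `x₁ = x₂ = 0`; and `φ(0, 0, x₃) = U(x₃)`. -/

def izkm (p q u v : ℝ) : M2 := p • (1 : M2) + q • Zm + u • Km + v • Mm

lemma izkm_eq_of (p q u v : ℝ) : izkm p q u v = !![p + u, -q + v; q + v, p - u] := by
  ext i j
  fin_cases i <;> fin_cases j <;> simp [izkm, Zm, Km, Mm, sub_eq_add_neg, add_comm]

lemma smul_izkm (c p q u v : ℝ) : c • izkm p q u v = izkm (c * p) (c * q) (c * u) (c * v) := by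
  simp only [izkm, smul_add, smul_smul]

lemma det_izkm (p q u v : ℝ) : (izkm p q u v).det = p ^ 2 + q ^ 2 - u ^ 2 - v ^ 2 := by
  rw [izkm_eq_of, det_fin_two_of]
  ring

lemma mip_izkm_self (p q u v : ℝ) :
    mip (izkm p q u v) (izkm p q u v) = 2 * (p ^ 2 + q ^ 2 + u ^ 2 + v ^ 2) := by
  simp [mip, izkm_eq_of, trace_fin_two, mul_apply, Fin.sum_univ_two]
  ring

lemma exists_izkm_eq (A : M2) : ∃ p q u v : ℝ, izkm p q u v = A := by
  refine ⟨(A 0 0 + A 1 1) / 2, (A 1 0 - A 0 1) / 2, (A 0 0 - A 1 1) / 2, (A 0 1 + A 1 0) / 2, ?_⟩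
  rw [izkm_eq_of, eta_fin_two A]
  ext i j
  fin_cases i <;> fin_cases j <;> simp <;> ring

lemma rho_sq (x1 x2 : ℝ) : rho x1 x2 ^ 2 = 2 + x1 ^ 2 + x2 ^ 2 :=
  Real.sq_sqrt (by positivity)

lemma phi_eq_smul_izkm (x1 x2 x3 : ℝ) :
    phi x1 x2 x3 = (√2)⁻¹ • izkm (rho x1 x2 * Real.cos x3) (rho x1 x2 * Real.sin x3) x1 x2 :=
  rfl

lemma inv_sqrt_two_sq : (√2 : ℝ)⁻¹ ^ 2 = 2⁻¹ := by
  rw [inv_pow, Real.sq_sqrt zero_le_two]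

lemma det_phi (x1 x2 x3 : ℝ) : (phi x1 x2 x3).det = 1 := by
  rw [phi_eq_smul_izkm, smul_izkm, det_izkm]
  linear_combination (√2 : ℝ)⁻¹ ^ 2 * rho x1 x2 ^ 2 * Real.sin_sq_add_cos_sq x3
    + (√2 : ℝ)⁻¹ ^ 2 * rho_sq x1 x2 + 2 * inv_sqrt_two_sq

lemma mip_phi_self (x1 x2 x3 : ℝ) :
    mip (phi x1 x2 x3) (phi x1 x2 x3) = 2 * (1 + x1 ^ 2 + x2 ^ 2) := by
  rw [phi_eq_smul_izkm, smul_izkm, mip_izkm_self]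
  linear_combination 2 * (√2 : ℝ)⁻¹ ^ 2 * rho x1 x2 ^ 2 * Real.sin_sq_add_cos_sq x3
    + 2 * (√2 : ℝ)⁻¹ ^ 2 * rho_sq x1 x2 + 4 * (1 + x1 ^ 2 + x2 ^ 2) * inv_sqrt_two_sq

lemma isSO_iff_mul_transpose (U : M2) : isSO U ↔ U.det = 1 ∧ U * Uᵀ = 1 := by
  refine and_congr_right fun hdet => ⟨fun hinv => ?_, inv_eq_right_inv⟩
  rw [← hinv]
  exact mul_nonsing_inv U (by rw [hdet]; exact isUnit_one)

lemma mip_self_eq_two_of_mul_transpose (U : M2) (hU : U * Uᵀ = 1) : mip U U = 2 := by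
  rw [mip, trace_mul_comm, hU, trace_one]
  simp

lemma izkm_mul_transpose_self (p q : ℝ) :
    izkm p q 0 0 * (izkm p q 0 0)ᵀ = (p ^ 2 + q ^ 2) • (1 : M2) := by
  rw [izkm_eq_of]
  ext i j
  fin_cases i <;> fin_cases j <;> simp [mul_apply, Fin.sum_univ_two] <;> ring

lemma Um_eq_izkm (θ : ℝ) : Um θ = izkm (Real.cos θ) (Real.sin θ) 0 0 := by
  simp [Um, izkm]

lemma Um_mul_transpose (θ : ℝ) : Um θ * (Um θ)ᵀ = 1 := by
  rw [Um_eq_izkm, izkm_mul_transpose_self, Real.cos_sq_add_sin_sq, one_smul]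

lemma phi_zero_zero (θ : ℝ) : phi 0 0 θ = Um θ := by
  have hρ : rho 0 0 = √2 := by norm_num [rho]
  rw [phi_eq_smul_izkm, smul_izkm, hρ, Um_eq_izkm]
  simp

lemma isSO_phi_iff (x1 x2 x3 : ℝ) : isSO (phi x1 x2 x3) ↔ x1 = 0 ∧ x2 = 0 := by
  rw [isSO_iff_mul_transpose]
  constructor
  · rintro ⟨-, hU⟩
    have h := mip_self_eq_two_of_mul_transpose _ hU
    rw [mip_phi_self] at h
    constructor <;> nlinarith [sq_nonneg x1, sq_nonneg x2]
  · rintro ⟨rfl, rfl⟩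
    exact ⟨det_phi 0 0 x3, phi_zero_zero x3 ▸ Um_mul_transpose x3⟩

lemma exists_polar (a b : ℝ) : ∃ θ : ℝ, √(a ^ 2 + b ^ 2) * Real.cos θ = a ∧
    √(a ^ 2 + b ^ 2) * Real.sin θ = b := by
  have hnorm : ‖(⟨a, b⟩ : ℂ)‖ = √(a ^ 2 + b ^ 2) := by
    rw [Complex.norm_def, Complex.normSq_mk]; ring_nf
  refine ⟨Complex.arg ⟨a, b⟩, ?_, ?_⟩
  · rw [← hnorm, Complex.norm_mul_cos_arg]
  · rw [← hnorm, Complex.norm_mul_sin_arg]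

lemma exists_phi_eq (A : M2) (hA : A.det = 1) : ∃ x1 x2 x3 : ℝ, phi x1 x2 x3 = A := by
  obtain ⟨p, q, u, v, rfl⟩ := exists_izkm_eq A
  rw [det_izkm] at hA
  obtain ⟨θ, hcos, hsin⟩ := exists_polar (√2 * p) (√2 * q)
  have hs : (√2 : ℝ) ^ 2 = 2 := Real.sq_sqrt zero_le_two
  have hρ : rho (√2 * u) (√2 * v) = √((√2 * p) ^ 2 + (√2 * q) ^ 2) := by
    rw [rho]
    congr 1
    linear_combination -(√2 : ℝ) ^ 2 * hA - hs
  refine ⟨√2 * u, √2 * v, θ, ?_⟩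
  rw [phi_eq_smul_izkm, hρ, hcos, hsin, smul_izkm]
  simp only [inv_mul_cancel_left₀ (Real.sqrt_ne_zero'.mpr zero_lt_two)]

/-- basic properties of the parameterization φ of SL(2,ℝ). -/
theorem phi_properties :
    (∀ x1 x2 x3 : ℝ, (phi x1 x2 x3).det = 1 ∧
        mip (phi x1 x2 x3) (phi x1 x2 x3) = 2 * (1 + x1 ^ 2 + x2 ^ 2) ∧
        (isSO (phi x1 x2 x3) ↔ x1 = 0 ∧ x2 = 0)) ∧
    (∀ A : M2, A.det = 1 → ∃ x1 x2 x3 : ℝ, phi x1 x2 x3 = A) :=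
  ⟨fun x1 x2 x3 => ⟨det_phi x1 x2 x3, mip_phi_self x1 x2 x3, isSO_phi_iff x1 x2 x3⟩, exists_phi_eq⟩
end
end

section
/- Let q = (q₁,q₂,q₃) ∈ ℝ³ and set A = φ(q₁ cos q₂, q₁ sin q₂, q₃) and ρ = (2 + q₁²)^{1/2}. Then ½|A|² = 1 + q₁², and A admits the factorization A = (1/√2) · U(½(q₃+q₂)) · (ρ·I + q₁·K) · U(½(q₃−q₂)). -/
open Matrix

noncomputable section

attribute [local instance] Matrix.normedAddCommGroup Matrix.normedSpace

/-! With `x₁ + i x₂ = q₁ e^{i q₂}` one has `φ(x) = (1/√2)(ρ U(x₃) + q₁ U(q₂) K)`, because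
`U(θ) K = cos θ K + sin θ M`. Since `K U(θ) = U(-θ) K` and `U` is a one-parameter group,
`U(a) (ρ I + q₁ K) U(b) = ρ U(a + b) + q₁ U(a - b) K`; take `a + b = q₃`, `a - b = q₂`.
The norm identity holds because `I, Z, K, M` are pairwise orthogonal, each of squared norm 2. -/

lemma mip_self_eq (A : M2) : mip A A = A 0 0 ^ 2 + A 0 1 ^ 2 + A 1 0 ^ 2 + A 1 1 ^ 2 := by
  simp only [mip, trace, diag, mul_apply, transpose_apply, Fin.sum_univ_two]
  ring

lemma Zm_mul_Zm : Zm * Zm = -1 := by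
  ext i j; fin_cases i <;> fin_cases j <;> simp [Zm]

lemma Zm_mul_Km : Zm * Km = Mm := by
  ext i j; fin_cases i <;> fin_cases j <;> simp [Zm, Km, Mm]

lemma Km_mul_Zm : Km * Zm = -Mm := by
  ext i j; fin_cases i <;> fin_cases j <;> simp [Zm, Km, Mm]

lemma Um_add (a b : ℝ) : Um (a + b) = Um a * Um b := by
  simp only [Um, add_mul, mul_add, smul_mul_smul, one_mul, mul_one, Zm_mul_Zm, Real.cos_add,
    Real.sin_add]
  module

lemma Um_mul_Km (θ : ℝ) : Um θ * Km = Real.cos θ • Km + Real.sin θ • Mm := by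
  simp only [Um, add_mul, smul_mul_assoc, one_mul, Zm_mul_Km]

lemma Km_mul_Um (θ : ℝ) : Km * Um θ = Um (-θ) * Km := by
  simp only [Um, add_mul, mul_add, smul_mul_assoc, mul_smul_comm, one_mul, mul_one, Zm_mul_Km,
    Km_mul_Zm, Real.cos_neg, Real.sin_neg]
  module

lemma phi_eq (x1 x2 x3 : ℝ) :
    phi x1 x2 x3 = (Real.sqrt 2)⁻¹ • (rho x1 x2 • Um x3 + x1 • Km + x2 • Mm) := by
  simp only [phi, Um, smul_add, smul_smul]

lemma half_mip_phi (x1 x2 x3 : ℝ) :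
    (1/2) * mip (phi x1 x2 x3) (phi x1 x2 x3) = 1 + x1 ^ 2 + x2 ^ 2 := by
  have hρ : rho x1 x2 ^ 2 = 2 + x1 ^ 2 + x2 ^ 2 := Real.sq_sqrt (by positivity)
  have h2 : (Real.sqrt 2)⁻¹ ^ 2 = 2⁻¹ := by rw [inv_pow, Real.sq_sqrt zero_le_two]
  rw [mip_self_eq]
  simp only [one_div, phi, Zm, smul_of, smul_cons, smul_eq_mul, mul_zero, mul_neg, mul_one,
    smul_empty, Km, Mm, Fin.isValue, Matrix.smul_apply, Matrix.add_apply, one_apply_eq, of_apply,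
    cons_val', cons_val_zero, cons_val_fin_one, add_zero, ne_eq, zero_ne_one, not_false_eq_true,
    one_apply_ne, cons_val_one, zero_add, one_ne_zero]
  linear_combination ((Real.sqrt 2)⁻¹ ^ 2 * rho x1 x2 ^ 2) * Real.sin_sq_add_cos_sq x3 + hρ / 2
    + (rho x1 x2 ^ 2 + x1 ^ 2 + x2 ^ 2) * h2

lemma rho_polar (r t : ℝ) : rho (r * Real.cos t) (r * Real.sin t) = Real.sqrt (2 + r ^ 2) := by
  rw [rho]
  congr 1
  linear_combination r ^ 2 * Real.sin_sq_add_cos_sq t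

lemma Um_mul_mul_Um (a b ρ r : ℝ) :
    Um a * (ρ • (1 : M2) + r • Km) * Um b
      = ρ • Um (a + b) + r • (Real.cos (a - b) • Km + Real.sin (a - b) • Mm) := by
  rw [mul_add, add_mul, mul_smul_comm, mul_one, mul_smul_comm, smul_mul_assoc, smul_mul_assoc,
    mul_assoc, Km_mul_Um, ← mul_assoc, ← Um_add, ← Um_add, ← sub_eq_add_neg, Um_mul_Km]

/-- factorization of A = φ(q₁cos q₂, q₁sin q₂, q₃). -/
theorem Aform (q1 q2 q3 : ℝ)
    (A : M2) (hA : A = phi (q1 * Real.cos q2) (q1 * Real.sin q2) q3)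
    (ρ : ℝ) (hρ : ρ = Real.sqrt (2 + q1 ^ 2)) :
    (1/2) * mip A A = 1 + q1 ^ 2 ∧
    A = (Real.sqrt 2)⁻¹ •
      (Um ((q3 + q2) / 2) * (ρ • (1 : M2) + q1 • Km) * Um ((q3 - q2) / 2)) := by
  subst hA hρ
  constructor
  · rw [half_mip_phi]
    linear_combination q1 ^ 2 * Real.sin_sq_add_cos_sq q2
  · have hsum : (q3 + q2) / 2 + (q3 - q2) / 2 = q3 := by ring
    have hdiff : (q3 + q2) / 2 - (q3 - q2) / 2 = q2 := by ring
    rw [Um_mul_mul_Um, hsum, hdiff, phi_eq, rho_polar]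
    module
end
end

section
/- Fix κ ≥ 0 and suppose A ∈ C²(I, M²) and λ ∈ C⁰(I, ℝ) satisfy Ä(t) + κA(t) = λ(t)·cof A(t) on an interval I. Then det A(t) = 1 for all t ∈ I if and only if there exists t₀ ∈ I with det A(t₀) = 1 and ⟨Ȧ(t₀), cof A(t₀)⟩ = 0, and λ(t) = Λ(A(t), Ȧ(t)) = 2(κ − det Ȧ(t))/|A(t)|² for all t ∈ I. -/
open Matrix

noncomputable section

attribute [local instance] Matrix.normedAddCommGroup Matrix.normedSpace

/-!
Write `φ = ⟨Ȧ, cof A⟩`. Since `⟨X, cof X⟩ = 2 det X` and `⟨cof X, cof X⟩ = |X|²`, one has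
`(det A)˙ = φ` and, along the equation, `φ̇ = ⟨Ä, cof A⟩ + 2 det Ȧ = λ|A|² - 2κ det A + 2 det Ȧ`.
Hence, wherever `det A ≠ 0`, the identity `λ = Λ(A, Ȧ)` is equivalent to
`φ̇ = -2κ (det A - 1)`. If `det A ≡ 1`, then `φ ≡ 0`, so `φ̇ ≡ 0`, which is `λ = Λ`.
Conversely, if `λ = Λ`, the defect `(det A - 1, φ)` solves the linear system
`(x, y)˙ = (y, -2κ x)` near every point where it vanishes, so by uniqueness of solutions its zero
set is open; it is also closed, and nonempty, hence all of the interval.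
-/

open Filter Topology

theorem IsPreconnected.apply_eq_of_eventually_eq {X Y : Type*} [TopologicalSpace X]
    [TopologicalSpace Y] [T1Space Y] {s : Set X} {f : X → Y} {y : Y} (hs : IsPreconnected s)
    (hs' : IsOpen s) (hf : ContinuousOn f s) (hloc : ∀ x ∈ s, f x = y → ∀ᶠ z in 𝓝 x, f z = y)
    {x₀ : X} (hx₀ : x₀ ∈ s) (h₀ : f x₀ = y) : ∀ x ∈ s, f x = y := by
  have hsub : s ⊆ {x | ∀ᶠ z in 𝓝 x, f z = y} := by
    refine hs.subset_of_closure_inter_subset isOpen_setOfPred_eventually_nhds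
      ⟨x₀, hx₀, hloc x₀ hx₀ h₀⟩ ?_
    rintro x ⟨hxu, hxs⟩
    refine hloc x hxs ?_
    have himage : f '' {x | ∀ᶠ z in 𝓝 x, f z = y} ⊆ {y} := by
      rintro _ ⟨z, hz, rfl⟩
      exact hz.self_of_nhds
    simpa using closure_mono himage
      ((hf.continuousAt (hs'.mem_nhds hxs)).continuousWithinAt.mem_closure_image hxu)
  exact fun x hx => (hsub hx).self_of_nhds

theorem HasDerivAt.eq_zero_of_eventually_const {E : Type*} [NormedAddCommGroup E]
    [NormedSpace ℝ E] {f : ℝ → E} {f' c : E} {x : ℝ} (h : HasDerivAt f f' x)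
    (hf : ∀ᶠ y in 𝓝 x, f y = c) : f' = 0 :=
  h.unique ((hasDerivAt_const x c).congr_of_eventuallyEq hf)

theorem eventuallyEq_zero_of_hasDerivAt_clm_apply {E : Type*} [NormedAddCommGroup E]
    [NormedSpace ℝ E] (L : E →L[ℝ] E) {f : ℝ → E} {t₀ : ℝ}
    (hf : ∀ᶠ t in 𝓝 t₀, HasDerivAt f (L (f t)) t) (h₀ : f t₀ = 0) : f =ᶠ[𝓝 t₀] 0 :=
  ODE_solution_unique_of_eventually (v := fun _ => L) (s := fun _ => Set.univ)
    (Eventually.of_forall fun _ => L.lipschitz.lipschitzOnWith)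
    (hf.mono fun _ ht => ⟨ht, trivial⟩)
    (Eventually.of_forall fun t => ⟨by simp, trivial⟩)
    h₀

lemma mip_eq (X Y : M2) :
    mip X Y = X 0 0 * Y 0 0 + X 0 1 * Y 0 1 + X 1 0 * Y 1 0 + X 1 1 * Y 1 1 := by
  simp only [mip, trace_fin_two, Matrix.mul_apply, transpose_apply, Fin.sum_univ_two]
  ring

lemma mip_sub_left (X Y Z : M2) : mip (X - Y) Z = mip X Z - mip Y Z := by
  simp [mip, Matrix.sub_mul]

lemma mip_smul_left (c : ℝ) (X Y : M2) : mip (c • X) Y = c * mip X Y := by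
  simp [mip]

lemma mip_cofm_comm (X Y : M2) : mip X (cofm Y) = mip Y (cofm X) := by
  simp only [mip_eq, cofm, Matrix.of_apply, Matrix.cons_val', Matrix.cons_val_zero,
    Matrix.cons_val_one, Matrix.empty_val', Matrix.cons_val_fin_one]
  ring

lemma mip_cofm_self_s5 (X : M2) : mip X (cofm X) = 2 * X.det := by
  simp only [mip_eq, cofm, Matrix.det_fin_two, Matrix.of_apply, Matrix.cons_val',
    Matrix.cons_val_zero, Matrix.cons_val_one, Matrix.empty_val', Matrix.cons_val_fin_one]
  ring

lemma mip_cofm_cofm (X : M2) : mip (cofm X) (cofm X) = mip X X := by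
  simp only [mip_eq, cofm, Matrix.of_apply, Matrix.cons_val', Matrix.cons_val_zero,
    Matrix.cons_val_one, Matrix.empty_val', Matrix.cons_val_fin_one]
  ring

lemma two_mul_abs_det_le_mip_self (X : M2) : 2 * |X.det| ≤ mip X X := by
  have hminus : mip X X - 2 * X.det = (X 0 0 - X 1 1) ^ 2 + (X 0 1 + X 1 0) ^ 2 := by
    rw [mip_eq, Matrix.det_fin_two]; ring
  have hplus : mip X X + 2 * X.det = (X 0 0 + X 1 1) ^ 2 + (X 0 1 - X 1 0) ^ 2 := by
    rw [mip_eq, Matrix.det_fin_two]; ring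
  rw [← abs_two, ← abs_mul, abs_le]
  constructor <;> linarith [sq_nonneg (X 0 0 - X 1 1), sq_nonneg (X 0 1 + X 1 0),
    sq_nonneg (X 0 0 + X 1 1), sq_nonneg (X 0 1 - X 1 0)]

lemma mip_self_ne_zero_of_det_ne_zero {X : M2} (h : X.det ≠ 0) : mip X X ≠ 0 :=
  (lt_of_lt_of_le (by positivity) (two_mul_abs_det_le_mip_self X)).ne'

section Derivatives

variable {X Y : ℝ → M2} {X' Y' : M2} {t : ℝ}

lemma HasDerivAt.entry (h : HasDerivAt X X' t) (i j : Fin 2) :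
    HasDerivAt (fun s => X s i j) (X' i j) t :=
  hasDerivAt_pi.1 (hasDerivAt_pi.1 h i) j

lemma hasDerivAt_mip (hX : HasDerivAt X X' t) (hY : HasDerivAt Y Y' t) :
    HasDerivAt (fun s => mip (X s) (Y s)) (mip X' (Y t) + mip (X t) Y') t := by
  simp only [mip_eq]
  refine ((((hX.entry 0 0).mul (hY.entry 0 0)).add ((hX.entry 0 1).mul (hY.entry 0 1))).add
    ((hX.entry 1 0).mul (hY.entry 1 0))).add ((hX.entry 1 1).mul (hY.entry 1 1)) |>.congr_deriv ?_
  ring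

lemma hasDerivAt_cofm (h : HasDerivAt X X' t) :
    HasDerivAt (fun s => cofm (X s)) (cofm X') t := by
  refine hasDerivAt_pi.2 fun i => hasDerivAt_pi.2 fun j => ?_
  fin_cases i <;> fin_cases j
  · exact h.entry 1 1
  · exact (h.entry 1 0).neg
  · exact (h.entry 0 1).neg
  · exact h.entry 0 0

lemma hasDerivAt_det (h : HasDerivAt X X' t) :
    HasDerivAt (fun s => (X s).det) (mip X' (cofm (X t))) t := by
  have hdet : (fun s => (X s).det) = fun s => mip (X s) (cofm (X s)) / 2 := by
    funext s; rw [mip_cofm_self_s5]; ring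
  rw [hdet]
  refine (hasDerivAt_mip h (hasDerivAt_cofm h)).div_const 2 |>.congr_deriv ?_
  rw [mip_cofm_comm (X t) X']
  ring

end Derivatives

lemma eq_Lam_iff {κ l : ℝ} {X X' X'' : M2} (hode : X'' + κ • X = l • cofm X) (hX : X.det ≠ 0) :
    l = Lam κ X X' ↔ mip X'' (cofm X) + 2 * X'.det = -(2 * κ) * (X.det - 1) := by
  have hmip : mip X'' (cofm X) = l * mip X X - 2 * κ * X.det := by
    rw [eq_sub_of_add_eq hode, mip_sub_left, mip_smul_left, mip_smul_left, mip_cofm_cofm,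
      mip_cofm_self_s5]
    ring
  rw [Lam, eq_div_iff (mip_self_ne_zero_of_det_ne_zero hX), hmip]
  constructor <;> intro h <;> linarith

section ConstraintDefect

variable {κ l t : ℝ} {A A' : ℝ → M2} {A'' : M2}

lemma hasDerivAt_mip_cofm (hA : HasDerivAt A (A' t) t) (hA' : HasDerivAt A' A'' t) :
    HasDerivAt (fun s => mip (A' s) (cofm (A s))) (mip A'' (cofm (A t)) + 2 * (A' t).det) t :=
  (hasDerivAt_mip hA' (hasDerivAt_cofm hA)).congr_deriv (by rw [mip_cofm_self_s5])

def constraintDefect (A A' : ℝ → M2) (t : ℝ) : ℝ × ℝ :=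
  ((A t).det - 1, mip (A' t) (cofm (A t)))

lemma constraintDefect_eq_zero_iff :
    constraintDefect A A' t = 0 ↔ (A t).det = 1 ∧ mip (A' t) (cofm (A t)) = 0 := by
  simp [constraintDefect, Prod.ext_iff, sub_eq_zero]

def defectField (κ : ℝ) : ℝ × ℝ →L[ℝ] ℝ × ℝ :=
  (ContinuousLinearMap.snd ℝ ℝ ℝ).prod (-(2 * κ) • ContinuousLinearMap.fst ℝ ℝ ℝ)

lemma hasDerivAt_constraintDefect (hA : HasDerivAt A (A' t) t) (hA' : HasDerivAt A' A'' t) :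
    HasDerivAt (constraintDefect A A')
      (mip (A' t) (cofm (A t)), mip A'' (cofm (A t)) + 2 * (A' t).det) t :=
  ((hasDerivAt_det hA).sub_const 1).prodMk (hasDerivAt_mip_cofm hA hA')

lemma hasDerivAt_constraintDefect_of_eq_Lam (hA : HasDerivAt A (A' t) t)
    (hA' : HasDerivAt A' A'' t) (hode : A'' + κ • A t = l • cofm (A t))
    (hl : l = Lam κ (A t) (A' t)) (hdet : (A t).det ≠ 0) :
    HasDerivAt (constraintDefect A A') (defectField κ (constraintDefect A A' t)) t := by
  refine (hasDerivAt_constraintDefect hA hA').congr_deriv ?_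
  rw [(eq_Lam_iff hode hdet).1 hl]
  simp [defectField, constraintDefect]

end ConstraintDefect

lemma constraintDefect_eventuallyEq_zero {κ t : ℝ} {A A' A'' : ℝ → M2} {lam : ℝ → ℝ}
    (hA : ∀ᶠ s in 𝓝 t, HasDerivAt A (A' s) s) (hA' : ∀ᶠ s in 𝓝 t, HasDerivAt A' (A'' s) s)
    (hode : ∀ᶠ s in 𝓝 t, A'' s + κ • A s = lam s • cofm (A s))
    (hlam : ∀ᶠ s in 𝓝 t, lam s = Lam κ (A s) (A' s)) (hzero : constraintDefect A A' t = 0) :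
    constraintDefect A A' =ᶠ[𝓝 t] 0 := by
  have hdet : ∀ᶠ s in 𝓝 t, (A s).det ≠ 0 :=
    (hasDerivAt_det hA.self_of_nhds).continuousAt.eventually_ne
      (by simp [(constraintDefect_eq_zero_iff.1 hzero).1])
  refine eventuallyEq_zero_of_hasDerivAt_clm_apply (defectField κ) ?_ hzero
  filter_upwards [hA, hA', hode, hlam, hdet] with s hAs hA's hodes hlams hdets
  exact hasDerivAt_constraintDefect_of_eq_Lam hAs hA's hodes hlams hdets

theorem lagrange_multiplier_characterization_general (κ : ℝ)
    (a b : ℝ) (hab : a < b) (A A' A'' : ℝ → M2) (lam : ℝ → ℝ)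
    (hA : ∀ t ∈ Set.Ioo a b, HasDerivAt A (A' t) t)
    (hA' : ∀ t ∈ Set.Ioo a b, HasDerivAt A' (A'' t) t)
    (hode : ∀ t ∈ Set.Ioo a b, A'' t + κ • A t = lam t • cofm (A t)) :
    (∀ t ∈ Set.Ioo a b, (A t).det = 1) ↔
      ((∃ t₀ ∈ Set.Ioo a b, (A t₀).det = 1 ∧ mip (A' t₀) (cofm (A t₀)) = 0) ∧
        ∀ t ∈ Set.Ioo a b, lam t = Lam κ (A t) (A' t)) := by
  have hnhds {p : ℝ → Prop} {t : ℝ} (ht : t ∈ Set.Ioo a b) (hp : ∀ s ∈ Set.Ioo a b, p s) :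
      ∀ᶠ s in 𝓝 t, p s :=
    eventually_of_mem (isOpen_Ioo.mem_nhds ht) hp
  constructor
  · intro hdet
    have hφ : ∀ t ∈ Set.Ioo a b, mip (A' t) (cofm (A t)) = 0 := fun t ht =>
      (hasDerivAt_det (hA t ht)).eq_zero_of_eventually_const (hnhds ht hdet)
    have hmid : (a + b) / 2 ∈ Set.Ioo a b := ⟨by linarith, by linarith⟩
    refine ⟨⟨_, hmid, hdet _ hmid, hφ _ hmid⟩, fun t ht => ?_⟩
    rw [eq_Lam_iff (hode t ht) (by simp [hdet t ht]), hdet t ht, sub_self, mul_zero]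
    exact (hasDerivAt_mip_cofm (hA t ht) (hA' t ht)).eq_zero_of_eventually_const (hnhds ht hφ)
  · rintro ⟨⟨t₀, ht₀, hdet₀, hφ₀⟩, hlam⟩
    have hzero := isPreconnected_Ioo.apply_eq_of_eventually_eq isOpen_Ioo
      (HasDerivAt.continuousOn fun s hs => hasDerivAt_constraintDefect (hA s hs) (hA' s hs))
      (fun t ht => constraintDefect_eventuallyEq_zero (hnhds ht hA) (hnhds ht hA')
        (hnhds ht hode) (hnhds ht hlam))
      ht₀ (constraintDefect_eq_zero_iff.2 ⟨hdet₀, hφ₀⟩)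
    exact fun t ht => (constraintDefect_eq_zero_iff.1 (hzero t ht)).1

/-- characterization of solutions staying in SL(2,ℝ) via the
Lagrange multiplier identity. -/
theorem lagrange_multiplier_characterization (κ : ℝ) (hκ : 0 ≤ κ)
    (a b : ℝ) (hab : a < b) (A A' A'' : ℝ → M2) (lam : ℝ → ℝ)
    (hA : ∀ t ∈ Set.Ioo a b, HasDerivAt A (A' t) t)
    (hA' : ∀ t ∈ Set.Ioo a b, HasDerivAt A' (A'' t) t)
    (hA'' : ContinuousOn A'' (Set.Ioo a b))
    (hlam : ContinuousOn lam (Set.Ioo a b))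
    (hode : ∀ t ∈ Set.Ioo a b, A'' t + κ • A t = lam t • cofm (A t)) :
    (∀ t ∈ Set.Ioo a b, (A t).det = 1) ↔
      ((∃ t₀ ∈ Set.Ioo a b, (A t₀).det = 1 ∧ mip (A' t₀) (cofm (A t₀)) = 0) ∧
        ∀ t ∈ Set.Ioo a b, lam t = Lam κ (A t) (A' t)) :=
  lagrange_multiplier_characterization_general κ a b hab A A' A'' lam hA hA' hode
end
end

section
/- Fix κ ≥ 0 and initial data (A₀,B₀) ∈ D (i.e. det A₀ = 1 and ⟨B₀, cof A₀⟩ = 0). The initial value problem Ä(t) + κA(t) = Λ(A(t),Ȧ(t))·cof A(t), A(0) = A₀, Ȧ(0) = B₀, has a unique global solution A ∈ C²(ℝ, M²); moreover det A(t) = 1 and ⟨Ȧ(t), cof A(t)⟩ = 0 for all t ∈ ℝ. -/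
open Matrix

noncomputable section

attribute [local instance] Matrix.normedAddCommGroup Matrix.normedSpace

namespace GEU

abbrev EE : Type := M2 × M2

/-- The first-order vector field. -/
def Fv (κ : ℝ) (p : EE) : EE := (p.2, Lam κ p.1 p.2 • cofm p.1 - κ • p.1)

/-- The invariant set. -/
def Sset (κ e₀ : ℝ) : Set EE :=
  {p | p.1.det = 1 ∧ mip p.2 (cofm p.1) = 0 ∧
    (1/2) * mip p.2 p.2 + (κ/2) * mip p.1 p.1 = e₀}

lemma mip_eq (A B : M2) :
    mip A B = A 0 0 * B 0 0 + A 0 1 * B 0 1 + A 1 0 * B 1 0 + A 1 1 * B 1 1 := by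
  simp [mip, Matrix.trace_fin_two, Matrix.mul_apply, Fin.sum_univ_two,
    Matrix.transpose_apply]
  ring

lemma cofm00 (A : M2) : cofm A 0 0 = A 1 1 := by simp [cofm]
lemma cofm01 (A : M2) : cofm A 0 1 = -(A 1 0) := by simp [cofm]
lemma cofm10 (A : M2) : cofm A 1 0 = -(A 0 1) := by simp [cofm]
lemma cofm11 (A : M2) : cofm A 1 1 = A 0 0 := by simp [cofm]

lemma det2 (A : M2) : A.det = A 0 0 * A 1 1 - A 0 1 * A 1 0 := Matrix.det_fin_two A

lemma mip_cof (A B : M2) :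
    mip B (cofm A) = B 0 0 * A 1 1 - B 0 1 * A 1 0 - B 1 0 * A 0 1 + B 1 1 * A 0 0 := by
  rw [mip_eq, cofm00, cofm01, cofm10, cofm11]; ring

lemma mip_nonneg (A : M2) : 0 ≤ mip A A := by
  rw [mip_eq]
  nlinarith [mul_self_nonneg (A 0 0), mul_self_nonneg (A 0 1),
    mul_self_nonneg (A 1 0), mul_self_nonneg (A 1 1)]

lemma two_le_mip_of_det (A : M2) (h : A.det = 1) : 2 ≤ mip A A := by
  rw [mip_eq]; rw [det2] at h
  nlinarith [sq_nonneg (A 0 0 - A 1 1), sq_nonneg (A 0 0 + A 1 1),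
    sq_nonneg (A 0 1 + A 1 0), sq_nonneg (A 0 1 - A 1 0)]

lemma norm_le_sqrt_mip (A : M2) : ‖A‖ ≤ Real.sqrt (mip A A) := by
  have hs : 0 ≤ Real.sqrt (mip A A) := Real.sqrt_nonneg _
  rw [Matrix.norm_le_iff hs]
  intro i
  intro j
  have hsq : (A i j)^2 ≤ mip A A := by
    fin_cases i <;> fin_cases j <;>
      simp only [Fin.zero_eta, Fin.mk_one, mip_eq] <;>
      nlinarith [mul_self_nonneg (A 0 0), mul_self_nonneg (A 0 1),
        mul_self_nonneg (A 1 0), mul_self_nonneg (A 1 1)]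
  calc ‖A i j‖ = Real.sqrt ((A i j)^2) := by
        rw [Real.sqrt_sq_eq_abs, Real.norm_eq_abs]
    _ ≤ Real.sqrt (mip A A) := Real.sqrt_le_sqrt hsq

/-- entrywise derivative -/
lemma hasDerivAt_entry {X : ℝ → M2} {X' : M2} {t : ℝ} (h : HasDerivAt X X' t) (i j : Fin 2) :
    HasDerivAt (fun s => X s i j) (X' i j) t :=
  hasDerivAt_pi.mp (hasDerivAt_pi.mp h i) j

lemma hasDerivAt_mip {X Y : ℝ → M2} {X' Y' : M2} {t : ℝ}
    (hX : HasDerivAt X X' t) (hY : HasDerivAt Y Y' t) :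
    HasDerivAt (fun s => mip (X s) (Y s)) (mip X' (Y t) + mip (X t) Y') t := by
  have h : ∀ i j : Fin 2, HasDerivAt (fun s => X s i j * Y s i j)
      (X' i j * Y t i j + X t i j * Y' i j) t :=
    fun i j => (hasDerivAt_entry hX i j).mul (hasDerivAt_entry hY i j)
  have key := (((h 0 0).add (h 0 1)).add (h 1 0)).add (h 1 1)
  have e : (fun s => mip (X s) (Y s)) = (fun s => X s 0 0 * Y s 0 0 + X s 0 1 * Y s 0 1
      + (X s 1 0 * Y s 1 0) + (X s 1 1 * Y s 1 1)) := by
    funext s; rw [mip_eq]; try ring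
  have hv : mip X' (Y t) + mip (X t) Y' = X' 0 0 * Y t 0 0 + X t 0 0 * Y' 0 0 +
      (X' 0 1 * Y t 0 1 + X t 0 1 * Y' 0 1) + (X' 1 0 * Y t 1 0 + X t 1 0 * Y' 1 0) +
      (X' 1 1 * Y t 1 1 + X t 1 1 * Y' 1 1) := by
    rw [mip_eq, mip_eq]; try ring
  rw [e, hv]; exact key

lemma hasDerivAt_det {X : ℝ → M2} {X' : M2} {t : ℝ} (hX : HasDerivAt X X' t) :
    HasDerivAt (fun s => (X s).det) (mip X' (cofm (X t))) t := by
  have h : ∀ i j : Fin 2, HasDerivAt (fun s => X s i j) (X' i j) t :=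
    fun i j => hasDerivAt_entry hX i j
  have key := (((h 0 0).mul (h 1 1)).sub ((h 0 1).mul (h 1 0)))
  have e : (fun s => (X s).det) = (fun s => X s 0 0 * X s 1 1 - X s 0 1 * X s 1 0) := by
    funext s; rw [det2]
  have hv : mip X' (cofm (X t)) = X' 0 0 * X t 1 1 + X t 0 0 * X' 1 1 -
      (X' 0 1 * X t 1 0 + X t 0 1 * X' 1 0) := by
    rw [mip_cof]; ring
  rw [e, hv]; exact key

lemma hasDerivAt_mip_cof {X Y : ℝ → M2} {X' Y' : M2} {t : ℝ}
    (hY : HasDerivAt Y Y' t) (hX : HasDerivAt X X' t) :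
    HasDerivAt (fun s => mip (Y s) (cofm (X s)))
      (mip Y' (cofm (X t)) + mip (Y t) (cofm X')) t := by
  have h : ∀ i j : Fin 2, HasDerivAt (fun s => X s i j) (X' i j) t :=
    fun i j => hasDerivAt_entry hX i j
  have h' : ∀ i j : Fin 2, HasDerivAt (fun s => Y s i j) (Y' i j) t :=
    fun i j => hasDerivAt_entry hY i j
  have key := ((((h' 0 0).mul (h 1 1)).sub ((h' 0 1).mul (h 1 0))).sub
    ((h' 1 0).mul (h 0 1))).add ((h' 1 1).mul (h 0 0))
  have e : (fun s => mip (Y s) (cofm (X s))) = (fun s => Y s 0 0 * X s 1 1 -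
      Y s 0 1 * X s 1 0 - Y s 1 0 * X s 0 1 + Y s 1 1 * X s 0 0) := by
    funext s; rw [mip_cof]
  have hv : mip Y' (cofm (X t)) + mip (Y t) (cofm X') =
      Y' 0 0 * X t 1 1 + Y t 0 0 * X' 1 1 - (Y' 0 1 * X t 1 0 + Y t 0 1 * X' 1 0) -
      (Y' 1 0 * X t 0 1 + Y t 1 0 * X' 0 1) + (Y' 1 1 * X t 0 0 + Y t 1 1 * X' 0 0) := by
    rw [mip_cof, mip_cof]; ring
  rw [e, hv]; exact key

end GEU
namespace GEU

lemma contDiff_fst_entry (i j : Fin 2) : ContDiff ℝ 1 (fun p : EE => p.1 i j) := by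
  fun_prop

lemma contDiff_snd_entry (i j : Fin 2) : ContDiff ℝ 1 (fun p : EE => p.2 i j) := by
  fun_prop

lemma contDiff_mip_fst : ContDiff ℝ 1 (fun p : EE => mip p.1 p.1) := by
  simp only [mip_eq]; fun_prop

lemma contDiff_num (κ : ℝ) : ContDiff ℝ 1 (fun p : EE => 2 * (κ - (p.2).det)) := by
  simp only [det2]; fun_prop

lemma contDiff_cof_fst : ContDiff ℝ 1 (fun p : EE => cofm p.1) := by
  apply contDiff_pi.mpr; intro i; apply contDiff_pi.mpr; intro j
  fin_cases i <;> fin_cases j <;>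
    simp only [Fin.zero_eta, Fin.mk_one, cofm00, cofm01, cofm10, cofm11] <;> fun_prop

lemma contDiffAt_Fv {κ : ℝ} {p : EE} (hp : mip p.1 p.1 ≠ 0) :
    ContDiffAt ℝ 1 (Fv κ) p := by
  have hlam : ContDiffAt ℝ 1 (fun q : EE => Lam κ q.1 q.2) p := by
    simp only [Lam]
    exact (contDiff_num κ).contDiffAt.div contDiff_mip_fst.contDiffAt hp
  have h2 : ContDiffAt ℝ 1 (fun q : EE => Lam κ q.1 q.2 • cofm q.1 - κ • q.1) p := by
    exact (hlam.smul contDiff_cof_fst.contDiffAt).sub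
      ((contDiffAt_const (c := κ)).smul contDiffAt_fst)
  exact ContDiffAt.prodMk contDiffAt_snd h2

lemma continuous_mip_pair : Continuous (fun q : EE × EE => mip q.1.1 q.2.1) := by
  simp only [mip_eq]; fun_prop

lemma isClosed_Sset (κ e₀ : ℝ) : IsClosed (Sset κ e₀) := by
  have h1 : IsClosed {p : EE | p.1.det = 1} := by
    apply isClosed_eq _ continuous_const
    simp only [det2]; fun_prop
  have h2 : IsClosed {p : EE | mip p.2 (cofm p.1) = 0} := by
    apply isClosed_eq _ continuous_const
    simp only [mip_cof]; fun_prop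
  have h3 : IsClosed {p : EE | (1/2) * mip p.2 p.2 + (κ/2) * mip p.1 p.1 = e₀} := by
    apply isClosed_eq _ continuous_const
    simp only [mip_eq]; fun_prop
  exact (h1.inter (h2.inter h3))

lemma isOpen_U : IsOpen {p : EE | 1 < mip p.1 p.1} := by
  have : Continuous (fun p : EE => mip p.1 p.1) := by simp only [mip_eq]; fun_prop
  exact isOpen_lt continuous_const this

end GEU
namespace GEU

lemma mip_smul_left (r : ℝ) (A B : M2) : mip (r • A) B = r * mip A B := by
  simp only [mip_eq, Matrix.smul_apply, smul_eq_mul]; ring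

lemma mip_sub_left (A B C : M2) : mip (A - B) C = mip A C - mip B C := by
  simp only [mip_eq, Matrix.sub_apply]; ring

lemma mip_comm (A B : M2) : mip A B = mip B A := by
  simp only [mip_eq]; ring

lemma mip_cof_cof (A : M2) : mip (cofm A) (cofm A) = mip A A := by
  rw [mip_cof, cofm00, cofm01, cofm10, cofm11, mip_eq]; ring

lemma mip_self_cof (A : M2) : mip A (cofm A) = 2 * A.det := by
  rw [mip_cof, det2]; ring

/-- the key cancellation for the constraint derivative -/
lemma wval (κ : ℝ) (A B : M2) (hA : mip A A ≠ 0) :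
    mip (Lam κ A B • cofm A - κ • A) (cofm A) + mip B (cofm B)
      = -(2*κ) * (A.det - 1) := by
  rw [mip_sub_left, mip_smul_left, mip_smul_left, mip_cof_cof, mip_self_cof,
    mip_self_cof, Lam]
  field_simp
  ring

/-- the key cancellation for the energy derivative -/
lemma eval (κ : ℝ) (A B : M2) :
    (1/2) * (mip (Lam κ A B • cofm A - κ • A) B + mip B (Lam κ A B • cofm A - κ • A))
      + (κ/2) * (mip B A + mip A B) = Lam κ A B * mip B (cofm A) := by
  rw [mip_sub_left, mip_smul_left, mip_smul_left,
    mip_comm B (Lam κ A B • cofm A - κ • A), mip_sub_left, mip_smul_left,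
    mip_smul_left, mip_comm B A, mip_comm (cofm A) B]
  ring

/-- Uniqueness of the zero solution for the linear system u' = w, w' = -2κ u. -/
lemma linODE_zero (κ : ℝ) {a b t₀ : ℝ} (ht₀ : t₀ ∈ Set.Ioo a b) {u w : ℝ → ℝ}
    (hu : ∀ t ∈ Set.Ioo a b, HasDerivAt u (w t) t)
    (hw : ∀ t ∈ Set.Ioo a b, HasDerivAt w (-(2*κ) * u t) t)
    (h0 : u t₀ = 0) (h0' : w t₀ = 0) :
    ∀ t ∈ Set.Ioo a b, u t = 0 ∧ w t = 0 := by
  set Lmap : (ℝ × ℝ) →L[ℝ] (ℝ × ℝ) :=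
    (ContinuousLinearMap.snd ℝ ℝ ℝ).prod ((-(2*κ)) • ContinuousLinearMap.fst ℝ ℝ ℝ) with hL
  have hv : ∀ t : ℝ, LipschitzOnWith ‖Lmap‖₊ (fun p : ℝ × ℝ => Lmap p)
      ((fun _ : ℝ => (Set.univ : Set (ℝ × ℝ))) t) :=
    fun _ => Lmap.lipschitz.lipschitzOnWith
  have key := ODE_solution_unique_of_mem_Ioo (fun t _ => hv t) ht₀
    (f := fun t => (u t, w t)) (g := fun _ => ((0:ℝ), (0:ℝ))) ?_ ?_ ?_
  · intro t ht
    have := key ht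
    simp only [Prod.mk.injEq] at this
    exact ⟨this.1, this.2⟩
  · intro t ht
    refine ⟨?_, trivial⟩
    have hd := (hu t ht).prodMk (hw t ht)
    refine hd.congr_deriv ?_
    try simp [hL, ContinuousLinearMap.prod_apply, smul_eq_mul]
  · intro t ht
    refine ⟨?_, trivial⟩
    have : Lmap ((0:ℝ), (0:ℝ)) = ((0:ℝ), (0:ℝ)) := by
      simp [hL]
    rw [this]
    exact hasDerivAt_const t _
  · simp [h0, h0']

end GEU
namespace GEU

/-- Components of the derivative of a curve into the product. -/
lemma hasDerivAt_comp_fst {f : ℝ → EE} {f' : EE} {t : ℝ} (h : HasDerivAt f f' t) :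
    HasDerivAt (fun s => (f s).1) f'.1 t :=
  (ContinuousLinearMap.fst ℝ M2 M2).hasFDerivAt.comp_hasDerivAt t h

lemma hasDerivAt_comp_snd {f : ℝ → EE} {f' : EE} {t : ℝ} (h : HasDerivAt f f' t) :
    HasDerivAt (fun s => (f s).2) f'.2 t :=
  (ContinuousLinearMap.snd ℝ M2 M2).hasFDerivAt.comp_hasDerivAt t h

/-- Invariance of the constraint set along any solution of the ODE. -/
lemma INV {κ e₀ : ℝ} {a b : ℝ} {f : ℝ → EE}
    (hf : ∀ t ∈ Set.Ioo a b, HasDerivAt f (Fv κ (f t)) t)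
    {t₀ : ℝ} (ht₀ : t₀ ∈ Set.Ioo a b) (hS : f t₀ ∈ Sset κ e₀) :
    ∀ t ∈ Set.Ioo a b, f t ∈ Sset κ e₀ := by
  set J := Set.Ioo a b with hJ
  set G := {t : ℝ | t ∈ J ∧ f t ∈ Sset κ e₀} with hG
  -- G is open
  have hGopen : IsOpen G := by
    rw [isOpen_iff_mem_nhds]
    rintro t₁ ⟨ht₁J, ht₁S⟩
    have hcont : ContinuousAt f t₁ := (hf t₁ ht₁J).continuousAt
    have hUnb : {t : ℝ | 1 < mip (f t).1 (f t).1} ∈ nhds t₁ := by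
      show f ⁻¹' {p : EE | 1 < mip p.1 p.1} ∈ nhds t₁
      apply hcont.preimage_mem_nhds
      apply isOpen_U.mem_nhds
      have := two_le_mip_of_det (f t₁).1 ht₁S.1
      simpa using by linarith
    have hJnb : J ∈ nhds t₁ := isOpen_Ioo.mem_nhds ht₁J
    obtain ⟨ε, hε, hball⟩ := Metric.mem_nhds_iff.mp (Filter.inter_mem hJnb hUnb)
    rw [Real.ball_eq_Ioo] at hball
    set I' := Set.Ioo (t₁ - ε) (t₁ + ε) with hI'
    have ht₁I' : t₁ ∈ I' := by constructor <;> simp [hI'] <;> linarith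
    -- set up u, w on I'
    set u : ℝ → ℝ := fun s => (f s).1.det - 1 with hu_def
    set w : ℝ → ℝ := fun s => mip (f s).2 (cofm (f s).1) with hw_def
    have hmem : ∀ t ∈ I', t ∈ J ∧ 1 < mip (f t).1 (f t).1 := fun t ht => hball ht
    have hu : ∀ t ∈ I', HasDerivAt u (w t) t := by
      intro t ht
      have hA := hasDerivAt_comp_fst (hf t (hmem t ht).1)
      have := (hasDerivAt_det hA).sub_const 1
      simpa only [Fv, hw_def, mip_comm] using this
    have hw : ∀ t ∈ I', HasDerivAt w (-(2*κ) * u t) t := by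
      intro t ht
      have hA := hasDerivAt_comp_fst (hf t (hmem t ht).1)
      have hB := hasDerivAt_comp_snd (hf t (hmem t ht).1)
      have key := hasDerivAt_mip_cof hB hA
      have hne : mip (f t).1 (f t).1 ≠ 0 := by
        have := (hmem t ht).2; linarith
      have hval : mip (Fv κ (f t)).2 (cofm (f t).1) + mip (f t).2 (cofm (Fv κ (f t)).1)
          = -(2*κ) * u t := by
        have := wval κ (f t).1 (f t).2 hne
        simpa only [Fv, hu_def] using this
      rw [← hval]
      exact key
    have hzero := linODE_zero κ ht₁I' hu hw
      (by simp only [hu_def, ht₁S.1]; ring) (by simpa only [hw_def] using ht₁S.2.1)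
    -- energy is constant on I'
    set en : ℝ → ℝ := fun s => (1/2) * mip (f s).2 (f s).2 + (κ/2) * mip (f s).1 (f s).1
      with hen_def
    have hen : ∀ t ∈ I', HasDerivAt en 0 t := by
      intro t ht
      have hA := hasDerivAt_comp_fst (hf t (hmem t ht).1)
      have hB := hasDerivAt_comp_snd (hf t (hmem t ht).1)
      have h1 := ((hasDerivAt_mip hB hB).const_mul (1/2)).add
        ((hasDerivAt_mip hA hA).const_mul (κ/2))
      have hval : (1/2) * (mip (Fv κ (f t)).2 ((f t).2) + mip ((f t).2) (Fv κ (f t)).2)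
          + (κ/2) * (mip (Fv κ (f t)).1 ((f t).1) + mip ((f t).1) (Fv κ (f t)).1) = 0 := by
        have h2 := eval κ (f t).1 (f t).2
        have h3 : mip (f t).2 (cofm (f t).1) = 0 := (hzero t ht).2
        simp only [Fv] at *
        rw [h2, h3, mul_zero]
      rw [← hval]
      exact h1
    have hconst : ∀ t ∈ I', en t = e₀ := by
      intro t ht
      have hcvx : Convex ℝ I' := convex_Ioo _ _
      have := hcvx.norm_image_sub_le_of_norm_hasDerivWithin_le
        (f := en) (f' := fun _ => (0:ℝ)) (C := 0)
        (fun s hs => (hen s hs).hasDerivWithinAt) (fun s _ => by simp) ht₁I' ht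
      simp only [zero_mul, norm_le_zero_iff, sub_eq_zero] at this
      rw [this]
      simpa only [hen_def] using ht₁S.2.2
    -- conclude I' ⊆ G
    apply Filter.mem_of_superset (Metric.ball_mem_nhds t₁ hε)
    rw [Real.ball_eq_Ioo]
    intro t ht
    refine ⟨(hmem t ht).1, ?_, ?_, ?_⟩
    · have := (hzero t ht).1; simp only [hu_def] at this; linarith
    · exact (hzero t ht).2
    · exact hconst t ht
  -- preconnectedness
  have hsub : J ⊆ G := by
    apply (isPreconnected_Ioo (a := a) (b := b)).subset_of_closure_inter_subset hGopen
      ⟨t₀, ht₀, ht₀, hS⟩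
    intro t ⟨htc, htJ⟩
    refine ⟨htJ, ?_⟩
    have hcont : ContinuousAt f t := (hf t htJ).continuousAt
    have h1 : f t ∈ closure (f '' G) := mem_closure_image hcont htc
    have h2 : f '' G ⊆ Sset κ e₀ := by rintro x ⟨s, hs, rfl⟩; exact hs.2
    have := closure_mono h2 h1
    rwa [(isClosed_Sset κ e₀).closure_eq] at this
  exact fun t ht => (hsub ht).2

end GEU
namespace GEU

/-- Uniqueness of solutions on an open interval, given that one of them stays in `Sset`. -/
lemma UNIQ {κ e₀ : ℝ} {a b t₀ : ℝ} {f g : ℝ → EE}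
    (hf : ∀ t ∈ Set.Ioo a b, HasDerivAt f (Fv κ (f t)) t)
    (hfS : ∀ t ∈ Set.Ioo a b, f t ∈ Sset κ e₀)
    (hg : ∀ t ∈ Set.Ioo a b, HasDerivAt g (Fv κ (g t)) t)
    (ht₀ : t₀ ∈ Set.Ioo a b) (heq : f t₀ = g t₀) :
    Set.EqOn f g (Set.Ioo a b) := by
  set J := Set.Ioo a b with hJ
  set G := {t : ℝ | t ∈ J ∧ f t = g t} with hG
  have hGopen : IsOpen G := by
    rw [isOpen_iff_mem_nhds]
    rintro t₁ ⟨ht₁J, ht₁e⟩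
    have hS := hfS t₁ ht₁J
    have hne : mip (f t₁).1 (f t₁).1 ≠ 0 := by
      have := two_le_mip_of_det (f t₁).1 hS.1; linarith
    obtain ⟨L, sV, hsV, hlip⟩ := (contDiffAt_Fv (κ := κ) hne).exists_lipschitzOnWith
    have hcf : ContinuousAt f t₁ := (hf t₁ ht₁J).continuousAt
    have hcg : ContinuousAt g t₁ := (hg t₁ ht₁J).continuousAt
    have hJn : J ∈ nhds t₁ := isOpen_Ioo.mem_nhds ht₁J
    have hfn : f ⁻¹' sV ∈ nhds t₁ := hcf.preimage_mem_nhds hsV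
    have hgn : g ⁻¹' sV ∈ nhds t₁ := by
      apply hcg.preimage_mem_nhds; rwa [← ht₁e]
    have hev := ODE_solution_unique_of_eventually
      (v := fun _ : ℝ => Fv κ) (s := fun _ : ℝ => sV) (K := L)
      (Filter.Eventually.of_forall fun _ => hlip) (f := f) (g := g) (t₀ := t₁) ?_ ?_ ht₁e
    · obtain ⟨V, hV, hVsub⟩ := Filter.eventuallyEq_iff_exists_mem.mp hev
      filter_upwards [Filter.inter_mem hJn hV] with t ht
      exact ⟨ht.1, hVsub ht.2⟩
    · filter_upwards [Filter.inter_mem hJn hfn] with t ht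
      exact ⟨hf t ht.1, ht.2⟩
    · filter_upwards [Filter.inter_mem hJn hgn] with t ht
      exact ⟨hg t ht.1, ht.2⟩
  have hsub : J ⊆ G := by
    apply (isPreconnected_Ioo (a := a) (b := b)).subset_of_closure_inter_subset hGopen
      ⟨t₀, ht₀, ht₀, heq⟩
    intro t ⟨htc, htJ⟩
    refine ⟨htJ, ?_⟩
    have hc : ContinuousAt (fun s => f s - g s) t :=
      ((hf t htJ).continuousAt).sub ((hg t htJ).continuousAt)
    have h1 : (f t - g t) ∈ closure ((fun s => f s - g s) '' G) :=
      mem_closure_image hc htc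
    have h2 : ((fun s => f s - g s) '' G) ⊆ {0} := by
      rintro x ⟨s, hs, rfl⟩; simp [hs.2]
    have h3 := closure_mono h2 h1
    rw [closure_singleton] at h3
    have : f t - g t = 0 := h3
    exact sub_eq_zero.mp this
  exact fun t ht => (hsub ht).2

end GEU
namespace GEU

/-- A function `C¹` near each point of a compact set is Lipschitz on it. -/
lemma lipschitzOnWith_of_compact {F : EE → EE} {K : Set EE} (hK : IsCompact K)
    (hF : ∀ p ∈ K, ContDiffAt ℝ 1 F p) :
    ∃ L : NNReal, LipschitzOnWith L F K := by
  rcases K.eq_empty_or_nonempty with hKe | hKne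
  · exact ⟨1, by simp [hKe]⟩
  -- bound on F
  have hFc : ContinuousOn F K := fun x hx => ((hF x hx).continuousAt).continuousWithinAt
  obtain ⟨C, hC⟩ := hK.exists_bound_of_continuousOn hFc
  have hC0 : 0 ≤ C := le_trans (norm_nonneg _) (hC hKne.choose hKne.choose_spec)
  -- local Lipschitz data
  have key : ∀ x : EE, ∃ (L : NNReal) (ρ : ℝ), 0 < ρ ∧
      (x ∈ K → LipschitzOnWith L F (Metric.ball x ρ)) := by
    intro x
    by_cases hx : x ∈ K
    · obtain ⟨L, s, hs, hlip⟩ := (hF x hx).exists_lipschitzOnWith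
      obtain ⟨ρ, hρ, hball⟩ := Metric.mem_nhds_iff.mp hs
      exact ⟨L, ρ, hρ, fun _ => hlip.mono hball⟩
    · exact ⟨1, 1, one_pos, fun h => absurd h hx⟩
  choose L ρ hρ hlip using key
  obtain ⟨t, htK, hcov⟩ := hK.elim_nhds_subcover (fun x => Metric.ball x (ρ x / 2))
    (fun x hx => Metric.ball_mem_nhds x (by linarith [hρ x]))
  have htne : t.Nonempty := by
    by_contra h
    rw [Finset.not_nonempty_iff_eq_empty] at h
    subst h
    simpa using hcov hKne.choose_spec
  set δ : ℝ := t.inf' htne (fun x => ρ x / 2) with hδ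
  have hδpos : 0 < δ := by
    rw [hδ, Finset.lt_inf'_iff]
    intro x _; linarith [hρ x]
  set Lr : ℝ := max ((t.sup L : NNReal) : ℝ) (2 * C / δ) with hLr
  have hLr0 : 0 ≤ Lr := le_trans (by positivity) (le_max_left _ _)
  refine ⟨Real.toNNReal Lr, ?_⟩
  rw [lipschitzOnWith_iff_dist_le_mul]
  intro x hx y hy
  rw [Real.coe_toNNReal _ hLr0]
  rcases lt_or_ge (dist x y) δ with hlt | hge
  · -- close points: in a common ball
    obtain ⟨i, hit, hxi⟩ : ∃ i ∈ t, x ∈ Metric.ball i (ρ i / 2) := by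
      have := hcov hx
      simpa using this
    have hyi : y ∈ Metric.ball i (ρ i) := by
      rw [Metric.mem_ball] at hxi ⊢
      have hδle : δ ≤ ρ i / 2 := Finset.inf'_le _ hit
      calc dist y i ≤ dist y x + dist x i := dist_triangle _ _ _
        _ < δ + ρ i / 2 := by rw [dist_comm y x]; exact add_lt_add hlt hxi
        _ ≤ ρ i := by linarith
    have hxi' : x ∈ Metric.ball i (ρ i) :=
      Metric.ball_subset_ball (by linarith [hρ i]) hxi
    have := lipschitzOnWith_iff_dist_le_mul.mp (hlip i (htK i hit)) x hxi' y hyi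
    calc dist (F x) (F y) ≤ (L i : ℝ) * dist x y := this
      _ ≤ Lr * dist x y := by
        apply mul_le_mul_of_nonneg_right _ dist_nonneg
        calc (L i : ℝ) ≤ ((t.sup L : NNReal) : ℝ) := by
              exact_mod_cast Finset.le_sup hit
          _ ≤ Lr := le_max_left _ _
  · -- far points: use the bound
    calc dist (F x) (F y) ≤ ‖F x‖ + ‖F y‖ := dist_le_norm_add_norm _ _
      _ ≤ 2 * C := by linarith [hC x hx, hC y hy]
      _ = (2 * C / δ) * δ := by field_simp
      _ ≤ (2 * C / δ) * dist x y := by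
          apply mul_le_mul_of_nonneg_left hge (by positivity)
      _ ≤ Lr * dist x y := mul_le_mul_of_nonneg_right (le_max_right _ _) dist_nonneg

end GEU
namespace GEU

/-- Uniform-time local existence over a compact subset of the good region. -/
lemma LOCEX {κ : ℝ} {K : Set EE} (hK : IsCompact K)
    (hKU : K ⊆ {p : EE | 1 < mip p.1 p.1}) :
    ∃ ε > (0:ℝ), ∀ x ∈ K, ∃ f : ℝ → EE, f 0 = x ∧
      ∀ t ∈ Set.Ioo (-ε) ε, HasDerivAt f (Fv κ (f t)) t := by
  rcases K.eq_empty_or_nonempty with hKe | hKne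
  · exact ⟨1, one_pos, by simp [hKe]⟩
  obtain ⟨δ, hδpos, hδsub⟩ := hK.exists_cthickening_subset_open isOpen_U hKU
  set K' := Metric.cthickening δ K with hK'
  have hK'c : IsCompact K' := hK.cthickening
  have hK'F : ∀ p ∈ K', ContDiffAt ℝ 1 (Fv κ) p := by
    intro p hp
    have := hδsub hp
    exact contDiffAt_Fv (by simp only [Set.mem_setOf_eq] at this; linarith)
  obtain ⟨L, hlip⟩ := lipschitzOnWith_of_compact hK'c hK'F
  have hFc : ContinuousOn (Fv κ) K' := fun x hx => ((hK'F x hx).continuousAt).continuousWithinAt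
  obtain ⟨C₀, hC₀⟩ := hK'c.exists_bound_of_continuousOn hFc
  set C := max C₀ 0 with hC
  have hC0 : 0 ≤ C := le_max_right _ _
  have hCb : ∀ x ∈ K', ‖Fv κ x‖ ≤ C := fun x hx => le_trans (hC₀ x hx) (le_max_left _ _)
  set ε := δ / (C + 1) with hε
  have hεpos : 0 < ε := by positivity
  refine ⟨ε, hεpos, fun x hx => ?_⟩
  have hball : Metric.closedBall x δ ⊆ K' :=
    Metric.closedBall_subset_cthickening hx δ
  have hPL : IsPicardLindelof (fun _ : ℝ => Fv κ) (tmin := -ε) (tmax := ε)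
      ⟨0, by constructor <;> linarith⟩ x (Real.toNNReal δ) 0 (Real.toNNReal C) L :=
    { lipschitzOnWith := fun t _ => by
        rw [Real.coe_toNNReal _ hδpos.le]; exact hlip.mono hball
      continuousOn := fun x _ => continuousOn_const
      norm_le := fun t _ y hy => by
        rw [Real.coe_toNNReal _ hC0]
        rw [Real.coe_toNNReal _ hδpos.le] at hy
        exact hCb y (hball hy)
      mul_max_le := by
        simp only [Real.coe_toNNReal _ hC0, NNReal.coe_zero, sub_zero,
          Real.coe_toNNReal _ hδpos.le]
        rw [show max ε (0 - -ε) = max (ε - 0) (0 - -ε) by rw [sub_zero]]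
        have : max (ε - 0) (0 - -ε) = ε := by
          have e1 : ε - 0 = ε := by ring
          have e2 : 0 - -ε = ε := by ring
          rw [e1, e2, max_self]
        rw [this]
        rw [hε]
        rw [div_eq_inv_mul, ← mul_assoc]
        have h1 : C * (C+1)⁻¹ ≤ 1 := by
          rw [mul_inv_le_iff₀ (by linarith)]; linarith
        nlinarith [h1, hδpos.le] }
  obtain ⟨f, hf0, hfd⟩ := hPL.exists_eq_forall_mem_Icc_hasDerivWithinAt₀
  refine ⟨f, hf0, fun t ht => ?_⟩
  exact (hfd t (Set.Ioo_subset_Icc_self ht)).hasDerivAt (Icc_mem_nhds ht.1 ht.2)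

end GEU
namespace GEU

lemma e0_nonneg {κ e₀ : ℝ} (hκ : 0 ≤ κ) {p : EE} (hp : p ∈ Sset κ e₀) : 0 ≤ e₀ := by
  have h1 := mip_nonneg p.1
  have h2 := mip_nonneg p.2
  have h3 := hp.2.2
  nlinarith

lemma B_bound {κ e₀ : ℝ} (hκ : 0 ≤ κ) {p : EE} (hp : p ∈ Sset κ e₀) :
    ‖p.2‖ ≤ Real.sqrt (2*e₀) := by
  refine le_trans (norm_le_sqrt_mip p.2) (Real.sqrt_le_sqrt ?_)
  have h1 := mip_nonneg p.1
  have h3 := hp.2.2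
  nlinarith

lemma A_bound {κ e₀ a b : ℝ} (hκ : 0 ≤ κ) {f : ℝ → EE}
    (hf : ∀ t ∈ Set.Ioo a b, HasDerivAt f (Fv κ (f t)) t ∧ f t ∈ Sset κ e₀)
    {t₀ t : ℝ} (h0 : t₀ ∈ Set.Ioo a b) (ht : t ∈ Set.Ioo a b) :
    ‖(f t).1‖ ≤ ‖(f t₀).1‖ + |t - t₀| * Real.sqrt (2*e₀) := by
  have hsub : Set.uIcc t₀ t ⊆ Set.Ioo a b := Set.ordConnected_Ioo.uIcc_subset h0 ht
  have key := (convex_uIcc t₀ t).norm_image_sub_le_of_norm_hasDerivWithin_le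
    (f := fun s => (f s).1) (f' := fun s => (f s).2) (C := Real.sqrt (2*e₀))
    (fun x hx => (hasDerivAt_comp_fst (hf x (hsub hx)).1).hasDerivWithinAt)
    (fun x hx => B_bound hκ (hf x (hsub hx)).2)
    Set.left_mem_uIcc Set.right_mem_uIcc
  have htri : ‖(f t).1‖ ≤ ‖(f t₀).1‖ + ‖(f t).1 - (f t₀).1‖ := by
    have := norm_sub_norm_le ((f t).1) ((f t₀).1)
    linarith
  rw [Real.norm_eq_abs] at key
  calc ‖(f t).1‖ ≤ ‖(f t₀).1‖ + ‖(f t).1 - (f t₀).1‖ := htri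
    _ ≤ ‖(f t₀).1‖ + Real.sqrt (2*e₀) * |t - t₀| := by linarith
    _ = ‖(f t₀).1‖ + |t - t₀| * Real.sqrt (2*e₀) := by ring

/-- Gluing two overlapping solutions. -/
lemma GLUE {κ e₀ α β γ δ τ : ℝ} {f g : ℝ → EE}
    (hf : ∀ t ∈ Set.Ioo α β, HasDerivAt f (Fv κ (f t)) t ∧ f t ∈ Sset κ e₀)
    (hg : ∀ t ∈ Set.Ioo γ δ, HasDerivAt g (Fv κ (g t)) t ∧ g t ∈ Sset κ e₀)
    (hβδ : β ≤ δ) (hτ : τ ∈ Set.Ioo (max α γ) β) (heq : f τ = g τ) :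
    ∃ h : ℝ → EE, (∀ t ∈ Set.Ioo α δ, HasDerivAt h (Fv κ (h t)) t ∧ h t ∈ Sset κ e₀) ∧
      Set.EqOn h f (Set.Ioo α β) ∧ Set.EqOn h g (Set.Ioo (max α γ) δ) := by
  have hsub1 : Set.Ioo (max α γ) (min β δ) ⊆ Set.Ioo α β := fun t ht =>
    ⟨lt_of_le_of_lt (le_max_left _ _) ht.1, lt_of_lt_of_le ht.2 (min_le_left _ _)⟩
  have hsub2 : Set.Ioo (max α γ) (min β δ) ⊆ Set.Ioo γ δ := fun t ht =>
    ⟨lt_of_le_of_lt (le_max_right _ _) ht.1, lt_of_lt_of_le ht.2 (min_le_right _ _)⟩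
  have hminβδ : min β δ = β := min_eq_left hβδ
  have hτ' : τ ∈ Set.Ioo (max α γ) (min β δ) := by rw [hminβδ]; exact hτ
  have hfg : Set.EqOn f g (Set.Ioo (max α γ) (min β δ)) :=
    UNIQ (fun t ht => (hf t (hsub1 ht)).1) (fun t ht => (hf t (hsub1 ht)).2)
      (fun t ht => (hg t (hsub2 ht)).1) hτ' heq
  set h : ℝ → EE := fun t => if t < τ then f t else g t with hh
  have claim1 : Set.EqOn h f (Set.Ioo α β) := by
    intro t ht
    by_cases hlt : t < τ
    · simp [hh, hlt]
    · have : t ∈ Set.Ioo (max α γ) (min β δ) := by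
        rw [hminβδ]
        exact ⟨lt_of_lt_of_le hτ.1 (not_lt.mp hlt), ht.2⟩
      simp only [hh, if_neg hlt]
      exact (hfg this).symm
  have claim2 : Set.EqOn h g (Set.Ioo (max α γ) δ) := by
    intro t ht
    by_cases hlt : t < τ
    · have : t ∈ Set.Ioo (max α γ) (min β δ) := by
        rw [hminβδ]
        exact ⟨ht.1, lt_trans hlt hτ.2⟩
      simp only [hh, if_pos hlt]
      exact hfg this
    · simp [hh, hlt]
  refine ⟨h, ?_, claim1, claim2⟩
  intro t ht
  by_cases hcase : t < β
  · have htf : t ∈ Set.Ioo α β := ⟨ht.1, hcase⟩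
    have hev : h =ᶠ[nhds t] f :=
      Filter.eventuallyEq_of_mem (isOpen_Ioo.mem_nhds htf) claim1
    have heq' : h t = f t := claim1 htf
    refine ⟨?_, ?_⟩
    · rw [heq']
      exact (hf t htf).1.congr_of_eventuallyEq hev
    · rw [heq']; exact (hf t htf).2
  · have htg : t ∈ Set.Ioo (max α γ) δ :=
      ⟨lt_trans hτ.1 (lt_of_lt_of_le hτ.2 (not_lt.mp hcase)), ht.2⟩
    have hev : h =ᶠ[nhds t] g :=
      Filter.eventuallyEq_of_mem (isOpen_Ioo.mem_nhds htg) claim2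
    have heq' : h t = g t := claim2 htg
    have htg' : t ∈ Set.Ioo γ δ := ⟨lt_of_le_of_lt (le_max_right α γ) htg.1, htg.2⟩
    refine ⟨?_, ?_⟩
    · rw [heq']
      exact (hg t htg').1.congr_of_eventuallyEq hev
    · rw [heq']; exact (hg t htg').2

end GEU
namespace GEU

/-- Solution on an arbitrarily large symmetric interval. -/
lemma SOL {κ e₀ : ℝ} (hκ : 0 ≤ κ) {x₀ : EE} (hx₀ : x₀ ∈ Sset κ e₀) {a : ℝ} (ha : 0 < a) :
    ∃ f : ℝ → EE, f 0 = x₀ ∧ ∀ t ∈ Set.Ioo (-a) a,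
      HasDerivAt f (Fv κ (f t)) t ∧ f t ∈ Sset κ e₀ := by
  have hCB0 : 0 ≤ Real.sqrt (2*e₀) := Real.sqrt_nonneg _
  set CB := Real.sqrt (2*e₀) with hCB
  clear_value CB
  set Ra := ‖x₀.1‖ + a * CB with hRa
  have hRax : ‖x₀.1‖ ≤ Ra := by rw [hRa]; nlinarith
  clear_value Ra
  set K := {p : EE | p ∈ Sset κ e₀ ∧ ‖p.1‖ ≤ Ra} with hK
  have hKcl : IsClosed K := by
    apply (isClosed_Sset κ e₀).inter
    exact isClosed_le (continuous_norm.comp continuous_fst) continuous_const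
  have hKc : IsCompact K := by
    apply (isCompact_closedBall (0:EE) (max Ra CB)).of_isClosed_subset hKcl
    intro p hp
    rw [Metric.mem_closedBall, dist_zero_right, Prod.norm_def]
    refine max_le_max hp.2 ?_
    rw [hCB]
    exact B_bound hκ hp.1
  have hKU : K ⊆ {p : EE | 1 < mip p.1 p.1} := by
    intro p hp
    have := two_le_mip_of_det p.1 hp.1.1
    simp only [Set.mem_setOf_eq]; linarith
  obtain ⟨ε, hε, hloc⟩ := LOCEX (κ := κ) hKc hKU
  -- a priori bound along solutions through x₀
  have bound : ∀ (c : ℝ), 0 < c → c ≤ a → ∀ (f : ℝ → EE), f 0 = x₀ →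
      (∀ t ∈ Set.Ioo (-c) c, HasDerivAt f (Fv κ (f t)) t ∧ f t ∈ Sset κ e₀) →
      ∀ t ∈ Set.Ioo (-c) c, f t ∈ K := by
    intro c hc hca f hf0 hf t ht
    refine ⟨(hf t ht).2, ?_⟩
    have h0c : (0:ℝ) ∈ Set.Ioo (-c) c := by constructor <;> linarith
    have hAb := A_bound hκ hf h0c ht
    rw [hf0, ← hCB] at hAb
    have habs : |t - 0| ≤ a := by
      rw [sub_zero, abs_le]
      exact ⟨by linarith [ht.1], by linarith [ht.2]⟩
    have habs0 : 0 ≤ |t - 0| := abs_nonneg _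
    calc ‖(f t).1‖ ≤ ‖x₀.1‖ + |t - 0| * CB := hAb
      _ ≤ ‖x₀.1‖ + a * CB := by nlinarith
      _ = Ra := hRa.symm
  -- one local solution through any admissible point, recentered
  have localsol : ∀ (x : EE) (t₀ : ℝ), x ∈ K → ∃ g : ℝ → EE, g t₀ = x ∧
      ∀ t ∈ Set.Ioo (t₀-ε) (t₀+ε), HasDerivAt g (Fv κ (g t)) t ∧ g t ∈ Sset κ e₀ := by
    intro x t₀ hx
    obtain ⟨g₀, hg₀0, hg₀d⟩ := hloc x hx
    refine ⟨fun t => g₀ (t - t₀), by simpa using hg₀0, ?_⟩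
    have hder : ∀ t ∈ Set.Ioo (t₀-ε) (t₀+ε),
        HasDerivAt (fun t => g₀ (t - t₀)) (Fv κ (g₀ (t - t₀))) t := by
      intro t ht
      have h1 := hg₀d (t - t₀) ⟨by linarith [ht.1], by linarith [ht.2]⟩
      have h2 : HasDerivAt (fun t : ℝ => t - t₀) 1 t := (hasDerivAt_id t).sub_const t₀
      have h3 := h1.scomp t h2
      rw [one_smul] at h3; exact h3
    have ht₀mem : t₀ ∈ Set.Ioo (t₀-ε) (t₀+ε) := by constructor <;> linarith
    have hS : ∀ t ∈ Set.Ioo (t₀-ε) (t₀+ε), g₀ (t - t₀) ∈ Sset κ e₀ := by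
      apply INV hder ht₀mem
      simpa [hg₀0] using hx.1
    exact fun t ht => ⟨hder t ht, hS t ht⟩
  -- the step-size sequence
  set b : ℕ → ℝ := fun k => min (((k:ℝ)+1)*(ε/2)) a with hb_def
  have hbpos : ∀ k, 0 < b k := by
    intro k
    apply lt_min _ ha
    have : (0:ℝ) ≤ (k:ℝ) := Nat.cast_nonneg k
    nlinarith
  have hba : ∀ k, b k ≤ a := fun k => min_le_right _ _
  have hb0 : b 0 ≤ ε/2 := by
    refine le_trans (min_le_left _ _) ?_
    norm_num
  have hbval : ∀ k : ℕ, ¬ (a ≤ ((k:ℝ)+1)*(ε/2)) → b k = ((k:ℝ)+1)*(ε/2) := by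
    intro k hk
    exact min_eq_left (by linarith [not_le.mp hk])
  have hbsat : ∀ k : ℕ, a ≤ ((k:ℝ)+1)*(ε/2) → b k = a := fun k hk => min_eq_right hk
  have hbsucc : ∀ k : ℕ, b (k+1) ≤ b k + ε/2 := by
    intro k
    rcases le_total (((k:ℝ)+1)*(ε/2)) a with h|h
    · have h1 : b k = ((k:ℝ)+1)*(ε/2) := min_eq_left h
      have h2 : b (k+1) ≤ (((k+1:ℕ):ℝ)+1)*(ε/2) := min_le_left _ _
      rw [h1]
      push_cast at h2 ⊢
      linarith
    · have h1 : b k = a := min_eq_right h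
      have h2 : b (k+1) ≤ a := min_le_right _ _
      rw [h1]
      linarith
  -- the inductive construction
  have claim : ∀ k : ℕ, ∃ f : ℝ → EE, f 0 = x₀ ∧
      ∀ t ∈ Set.Ioo (-(b k)) (b k),
        HasDerivAt f (Fv κ (f t)) t ∧ f t ∈ Sset κ e₀ := by
    intro k
    induction k with
    | zero =>
      have hx₀K : x₀ ∈ K := ⟨hx₀, hRax⟩
      obtain ⟨g, hg0, hgfull⟩ := localsol x₀ 0 hx₀K
      refine ⟨g, hg0, fun t ht => hgfull t ?_⟩
      obtain ⟨h1, h2⟩ := ht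
      constructor
      · have := hbpos 0; linarith
      · have := hbpos 0; linarith
    | succ k ih =>
      obtain ⟨f, hf0, hf⟩ := ih
      by_cases hcase : a ≤ ((k:ℝ)+1)*(ε/2)
      · -- already saturated
        have h1 : b k = a := hbsat k hcase
        have h2 : b (k+1) = a := hbsat (k+1) (by push_cast; linarith)
        rw [h2, ← h1]
        exact ⟨f, hf0, hf⟩
      · have hcval : b k = ((k:ℝ)+1)*(ε/2) := hbval k hcase
        have hcε : ε/2 ≤ b k := by
          rw [hcval]
          have : (0:ℝ) ≤ (k:ℝ) := Nat.cast_nonneg k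
          nlinarith
        have hsucc := hbsucc k
        have hbkpos := hbpos k
        have hbk1pos := hbpos (k+1)
        -- right extension at t₁ := b k - ε/4
        have ht₁mem : b k - ε/4 ∈ Set.Ioo (-(b k)) (b k) := by
          constructor <;> [linarith; linarith]
        have hx₁K : f (b k - ε/4) ∈ K := bound (b k) hbkpos (hba k) f hf0 hf _ ht₁mem
        obtain ⟨g, hgt₁, hgfull⟩ := localsol (f (b k - ε/4)) (b k - ε/4) hx₁K
        -- left extension at t₂ := -(b k) + ε/4
        have ht₂mem : -(b k) + ε/4 ∈ Set.Ioo (-(b k)) (b k) := by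
          constructor <;> [linarith; linarith]
        have hx₂K : f (-(b k) + ε/4) ∈ K := bound (b k) hbkpos (hba k) f hf0 hf _ ht₂mem
        obtain ⟨h, hht₂, hhfull⟩ := localsol (f (-(b k) + ε/4)) (-(b k) + ε/4) hx₂K
        -- glue on the right
        obtain ⟨f₂, hf₂, hf₂f, _⟩ := GLUE (α := -(b k)) (β := b k)
          (γ := (b k - ε/4) - ε) (δ := (b k - ε/4) + ε)
          hf hgfull (by linarith) ⟨max_lt ht₁mem.1 (by linarith), ht₁mem.2⟩ hgt₁.symm
        -- glue on the left
        have hht₂' : h (-(b k) + ε/4) = f₂ (-(b k) + ε/4) := by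
          rw [hht₂]
          exact (hf₂f ht₂mem).symm
        obtain ⟨f₃, hf₃, _, hf₃f₂⟩ := GLUE (α := (-(b k) + ε/4) - ε)
          (β := (-(b k) + ε/4) + ε) (γ := -(b k)) (δ := (b k - ε/4) + ε)
          hhfull hf₂ (by linarith) ⟨max_lt (by linarith) (by linarith), by linarith⟩ hht₂'
        have h0mem : (0:ℝ) ∈ Set.Ioo (max ((-(b k) + ε/4) - ε) (-(b k))) ((b k - ε/4) + ε) :=
          ⟨max_lt (by linarith) (by linarith), by linarith⟩
        have hf₃0 : f₃ 0 = x₀ := by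
          rw [hf₃f₂ h0mem, hf₂f (by constructor <;> linarith), hf0]
        refine ⟨f₃, hf₃0, fun t ht => hf₃ t ?_⟩
        obtain ⟨h1, h2⟩ := ht
        constructor
        · linarith
        · linarith
  -- choose k large enough
  obtain ⟨k, hk⟩ : ∃ k : ℕ, a ≤ ((k:ℝ)+1)*(ε/2) := by
    refine ⟨⌈2*a/ε⌉₊, ?_⟩
    have h1 : (2*a/ε : ℝ) ≤ (⌈2*a/ε⌉₊ : ℝ) := Nat.le_ceil _
    rw [div_le_iff₀ hε] at h1
    nlinarith
  obtain ⟨f, hf0, hf⟩ := claim k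
  rw [hbsat k hk] at hf
  exact ⟨f, hf0, hf⟩

end GEU
namespace GEU

/-- Global solution. -/
lemma MAIN {κ e₀ : ℝ} (hκ : 0 ≤ κ) {x₀ : EE} (hx₀ : x₀ ∈ Sset κ e₀) :
    ∃ f : ℝ → EE, f 0 = x₀ ∧ ∀ t : ℝ,
      HasDerivAt f (Fv κ (f t)) t ∧ f t ∈ Sset κ e₀ := by
  have hsol : ∀ a : ℝ, 0 < a → ∃ f : ℝ → EE, f 0 = x₀ ∧ ∀ t ∈ Set.Ioo (-a) a,
      HasDerivAt f (Fv κ (f t)) t ∧ f t ∈ Sset κ e₀ := fun a ha => SOL hκ hx₀ ha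
  set sol : ℝ → ℝ → EE := fun a => if h : 0 < a then (hsol a h).choose else fun _ => x₀
    with hsol_def
  have hsolspec : ∀ a : ℝ, 0 < a → sol a 0 = x₀ ∧ ∀ t ∈ Set.Ioo (-a) a,
      HasDerivAt (sol a) (Fv κ (sol a t)) t ∧ sol a t ∈ Sset κ e₀ := by
    intro a ha
    rw [hsol_def]
    simp only [dif_pos ha]
    exact (hsol a ha).choose_spec
  have hcons : ∀ a c : ℝ, 0 < c → c ≤ a → Set.EqOn (sol c) (sol a) (Set.Ioo (-c) c) := by
    intro a c hc hca
    have ha : 0 < a := lt_of_lt_of_le hc hca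
    have hsub : Set.Ioo (-c) c ⊆ Set.Ioo (-a) a := Set.Ioo_subset_Ioo (by linarith) hca
    have h0 : (0:ℝ) ∈ Set.Ioo (-c) c := by constructor <;> linarith
    exact UNIQ (fun t ht => ((hsolspec c hc).2 t ht).1)
      (fun t ht => ((hsolspec c hc).2 t ht).2)
      (fun t ht => ((hsolspec a ha).2 t (hsub ht)).1) h0
      (by rw [(hsolspec c hc).1, (hsolspec a ha).1])
  set f : ℝ → EE := fun t => sol (|t|+1) t with hf_def
  have hfa : ∀ a : ℝ, 0 < a → Set.EqOn f (sol a) (Set.Ioo (-a) a) := by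
    intro a ha t ht
    have hb : (0:ℝ) < |t|+1 := by positivity
    have htb : t ∈ Set.Ioo (-(|t|+1)) (|t|+1) := by
      constructor <;> [linarith [neg_abs_le t]; linarith [le_abs_self t]]
    rcases le_total (|t|+1) a with h|h
    · exact hcons a (|t|+1) hb h htb
    · have hta : t ∈ Set.Ioo (-a) a := ht
      exact (hcons (|t|+1) a ha h hta).symm
  have hf0 : f 0 = x₀ := by
    have h01 : (0:ℝ) ∈ Set.Ioo (-(1:ℝ)) 1 := by norm_num
    have := hfa 1 one_pos h01
    rw [this, (hsolspec 1 one_pos).1]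
  refine ⟨f, hf0, fun t => ?_⟩
  set a := |t| + 2 with ha_def
  have ha : (0:ℝ) < a := by positivity
  have htmem : t ∈ Set.Ioo (-a) a := by
    constructor <;> [linarith [neg_abs_le t]; linarith [le_abs_self t]]
  have hev : f =ᶠ[nhds t] sol a :=
    Filter.eventuallyEq_of_mem (isOpen_Ioo.mem_nhds htmem) (hfa a ha)
  have heq : f t = sol a t := hfa a ha htmem
  constructor
  · rw [heq]
    exact (((hsolspec a ha).2 t htmem).1).congr_of_eventuallyEq hev
  · rw [heq]
    exact ((hsolspec a ha).2 t htmem).2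

end GEU


open GEU

/-- global existence and uniqueness for the initial value problem,
together with the invariance of the constraint manifold D. -/
theorem global_existence_uniqueness (κ : ℝ) (hκ : 0 ≤ κ) (A₀ B₀ : M2)
    (hdet : A₀.det = 1) (htan : mip B₀ (cofm A₀) = 0) :
    ∃ A : ℝ → M2,
      (ContDiff ℝ 2 A ∧ A 0 = A₀ ∧ deriv A 0 = B₀ ∧
        ∀ t : ℝ, deriv (deriv A) t + κ • A t
          = Lam κ (A t) (deriv A t) • cofm (A t)) ∧
      (∀ B : ℝ → M2,
        (ContDiff ℝ 2 B ∧ B 0 = A₀ ∧ deriv B 0 = B₀ ∧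
          ∀ t : ℝ, deriv (deriv B) t + κ • B t
            = Lam κ (B t) (deriv B t) • cofm (B t)) → B = A) ∧
      (∀ t : ℝ, (A t).det = 1 ∧ mip (deriv A t) (cofm (A t)) = 0) := by
  set e₀ : ℝ := (1/2) * mip B₀ B₀ + (κ/2) * mip A₀ A₀ with he₀
  have hx₀ : ((A₀, B₀) : EE) ∈ Sset κ e₀ := ⟨hdet, htan, rfl⟩
  obtain ⟨f, hf0, hf⟩ := MAIN hκ hx₀
  set A : ℝ → M2 := fun t => (f t).1 with hA_def
  have hA1 : ∀ t, HasDerivAt A ((f t).2) t := fun t => hasDerivAt_comp_fst (hf t).1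
  have hderivA : deriv A = fun t => (f t).2 := funext fun t => (hA1 t).deriv
  have hA2 : ∀ t, HasDerivAt (fun s => (f s).2) ((Fv κ (f t)).2) t :=
    fun t => hasDerivAt_comp_snd (hf t).1
  have hd2 : ∀ t, deriv (deriv A) t = (Fv κ (f t)).2 := by
    intro t
    rw [hderivA]
    exact (hA2 t).deriv
  have hFv2 : ∀ t, (Fv κ (f t)).2 = Lam κ (f t).1 (f t).2 • cofm (f t).1 - κ • (f t).1 := by
    intro t; rfl
  have hcd : ContDiff ℝ 2 A := by
    rw [show (2 : WithTop ℕ∞) = 1 + 1 from rfl, contDiff_succ_iff_deriv]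
    refine ⟨fun t => (hA1 t).differentiableAt, by simp, ?_⟩
    erw [hderivA, contDiff_one_iff_deriv]
    constructor
    · exact fun t => (hA2 t).differentiableAt
    · have : deriv (fun s => (f s).2) = fun t => (Fv κ (f t)).2 :=
        funext fun t => (hA2 t).deriv
      erw [this]
      rw [continuous_iff_continuousAt]
      intro t
      have hne : mip (f t).1 (f t).1 ≠ 0 := by
        have := two_le_mip_of_det (f t).1 (hf t).2.1; linarith
      have hcf : ContinuousAt f t := (hf t).1.continuousAt
      exact (((contDiffAt_Fv (κ := κ) hne).continuousAt).comp hcf).snd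
  have hA0 : A 0 = A₀ := by rw [hA_def]; simp [hf0]
  have hA0' : deriv A 0 = B₀ := by rw [hderivA]; simp [hf0]
  have hode : ∀ t : ℝ, deriv (deriv A) t + κ • A t
      = Lam κ (A t) (deriv A t) • cofm (A t) := by
    intro t
    rw [hd2 t, hFv2 t]
    have h1 : deriv A t = (f t).2 := by rw [hderivA]
    rw [h1]
    abel
  refine ⟨A, ⟨hcd, hA0, hA0', hode⟩, ?_, ?_⟩
  · -- uniqueness
    rintro Bf ⟨hBcd, hB0, hB0', hBode⟩
    have hBd : Differentiable ℝ Bf := hBcd.differentiable (by norm_num)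
    have hB'cd : ContDiff ℝ 1 (deriv Bf) := by
      rw [show (2 : WithTop ℕ∞) = 1 + 1 from rfl, contDiff_succ_iff_deriv] at hBcd
      exact hBcd.2.2
    have hB'd : Differentiable ℝ (deriv Bf) := hB'cd.differentiable one_ne_zero
    set g : ℝ → EE := fun t => (Bf t, deriv Bf t) with hg_def
    have hgd : ∀ t, HasDerivAt g (Fv κ (g t)) t := by
      intro t
      have h1 := ((hBd t).hasDerivAt).prodMk ((hB'd t).hasDerivAt)
      have h2 : deriv (deriv Bf) t
          = Lam κ (Bf t) (deriv Bf t) • cofm (Bf t) - κ • Bf t := by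
        have := hBode t
        linear_combination (norm := module) this
      have h3 : Fv κ (g t) = (deriv Bf t, deriv (deriv Bf) t) := by
        rw [hg_def]
        show (deriv Bf t, Lam κ (Bf t) (deriv Bf t) • cofm (Bf t) - κ • Bf t) = _
        rw [h2]
      rw [h3]
      exact h1
    have hg0 : g 0 = ((A₀, B₀) : EE) := by rw [hg_def]; simp [hB0, hB0']
    have hgf : ∀ t : ℝ, f t = g t := by
      intro t
      have hb : (0:ℝ) < |t| + 1 := by positivity
      have htmem : t ∈ Set.Ioo (-(|t|+1)) (|t|+1) := by
        constructor <;> [linarith [neg_abs_le t]; linarith [le_abs_self t]]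
      have h0mem : (0:ℝ) ∈ Set.Ioo (-(|t|+1)) (|t|+1) := by
        constructor <;> [linarith [abs_nonneg t]; linarith [abs_nonneg t]]
      exact UNIQ (fun s _ => (hf s).1) (fun s _ => (hf s).2) (fun s _ => hgd s)
        h0mem (by rw [hf0, hg0]) htmem
    funext t
    have h := congrArg Prod.fst (hgf t)
    rw [hA_def]
    exact h.symm
  · intro t
    refine ⟨(hf t).2.1, ?_⟩
    rw [hderivA]
    exact (hf t).2.2.1
end
end

section
/- Fix κ ≥ 0. If (A,B) ∈ M²×M² satisfies det A = 1 and ⟨B, cof A⟩ = 0, then Λ(A,B) = (4X₁(A,B) + 2X₂(A,B)² − 2X₃(A,B)²)/|A|⁴. -/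
open Matrix

noncomputable section

attribute [local instance] Matrix.normedAddCommGroup Matrix.normedSpace

/-
Split `M²` into the conformal matrices `aI + bZ`, which commute with `Z`, and the anticonformal
ones, which anticommute with it. Then `X₃ = ⟨ZA⁺, B⁺⟩` and `X₂ = ⟨ZA⁻, B⁻⟩`; as each part is a
Euclidean plane on which `Z` is a quarter turn, Lagrange's identity gives
`X₃² = |A⁺|²|B⁺|² − ⟨A⁺, B⁺⟩²` and likewise for `X₂`. Since `det A = (|A⁺|² − |A⁻|²)/2` and
`⟨B, cof A⟩ = ⟨A⁺, B⁺⟩ − ⟨A⁻, B⁻⟩`, this yields the polynomial identity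
`X₃² − X₂² = |B|² det A + det B |A|² − ⟨A, B⟩⟨B, cof A⟩`; under the two constraints the formula
for `Λ` is a rearrangement of it.
-/

lemma mip_fin_two (A B : M2) :
    mip A B = A 0 0 * B 0 0 + A 0 1 * B 0 1 + A 1 0 * B 1 0 + A 1 1 * B 1 1 := by
  simp only [mip, trace_fin_two, mul_apply, transpose_apply, Fin.sum_univ_two]
  ring

lemma mip_self_pos {A : M2} (hA : A ≠ 0) : 0 < mip A A := by
  have h := (posSemidef_conjTranspose_mul_self A).trace_nonneg
  rw [conjTranspose_eq_transpose_of_trivial] at h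
  exact h.lt_of_ne' (mt trace_conjTranspose_mul_self_eq_zero_iff.mp hA)

lemma X3_sq_sub_X2_sq (A B : M2) :
    X3 A B ^ 2 - X2 A B ^ 2
      = mip B B * A.det + B.det * mip A A - mip A B * mip B (cofm A) := by
  simp only [X2, X3, mip_fin_two, det_fin_two, Zm, cofm, mul_apply, Fin.sum_univ_two,
    Matrix.sub_apply, Matrix.add_apply, of_apply, cons_val', cons_val_zero, cons_val_one,
    empty_val', cons_val_fin_one]
  ring

theorem lam_formula_general (κ : ℝ) (A B : M2)
    (hdet : A.det = 1) (htan : mip B (cofm A) = 0) :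
    Lam κ A B = (4 * X1 κ A B + 2 * X2 A B ^ 2 - 2 * X3 A B ^ 2) / (mip A A) ^ 2 := by
  have hA : 0 < mip A A := mip_self_pos fun h ↦ by simp [h] at hdet
  have key := X3_sq_sub_X2_sq A B
  rw [hdet, htan] at key
  rw [Lam, X1, eq_div_iff (by positivity), div_mul_eq_mul_div, div_eq_iff hA.ne']
  linear_combination 2 * mip A A * key

/-- alternate expression for the Lagrange multiplier on D. -/
theorem lam_formula (κ : ℝ) (hκ : 0 ≤ κ) (A B : M2)
    (hdet : A.det = 1) (htan : mip B (cofm A) = 0) :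
    Lam κ A B = (4 * X1 κ A B + 2 * X2 A B ^ 2 - 2 * X3 A B ^ 2) / (mip A A) ^ 2 :=
  lam_formula_general κ A B hdet htan
end
end
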